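/- arXiv:2012.06783 — 4 statements merged into one kernel-verified Lean document; each statement's English description precedes it below -/
import Mathlib

section
/- Let 1 ≤ q < ∞. Let X be a real Banach space with an unconditional basis (e_n)_{n∈ℕ} satisfying a lower q-estimate and let Y be a real Banach space with an unconditional basis (y_n)_{n∈ℕ} satisfying an upper q-estimate. Then every strictly singular bounded linear operator T : Y → X is compact. -/
/-!
If `T` is not compact, there are `v k` in the unit ball whose images are pairwise `δ`-apart.
The coordinate functionals of an unconditional basis of a Banach space are continuous (closed
graph theorem for the map sending `x` to the family of all its finite partial sums, in `ℓ^∞`), so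
along a subsequence all coordinates of `v k` and of `T (v k)` converge, and the differences
`w i = v (2 i) - v (2 i + 1)` are coordinatewise null with `δ ≤ ‖T (w i)‖`. A gliding hump makes
`w i` and `T (w i)` small perturbations of block sequences with common disjoint blocks; the upper
`q`-estimate in `Y` and the lower `q`-estimate in `X` then give
`‖∑ aᵢ • wᵢ‖ ≲ ‖a‖_q ≲ ‖T (∑ aᵢ • wᵢ)‖`, so `T` is bounded below on the infinite-dimensional span
of the `w i`.
-/

open scoped BigOperators

/-- `e` is a Schauder basis of `X`: every vector has a unique expansion as a norm-convergent
series `∑ n, a n • e n` (partial sums over `Finset.range N`). -/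
def IsSchauderBasis {X : Type*} [NormedAddCommGroup X] [NormedSpace ℝ X] (e : ℕ → X) : Prop :=
  ∀ x : X, ∃! a : ℕ → ℝ,
    Filter.Tendsto (fun N => ∑ n ∈ Finset.range N, a n • e n) Filter.atTop (nhds x)

/-- `u` is a block basic sequence with respect to `e`. -/
def IsBlockBasic {X : Type*} [NormedAddCommGroup X] [NormedSpace ℝ X]
    (e : ℕ → X) (u : ℕ → X) : Prop :=
  ∃ (A : ℕ → Finset ℕ) (a : ℕ → ℝ),
    (∀ j, (A j).Nonempty) ∧
    (∀ j, ∀ m ∈ A j, ∀ k ∈ A (j + 1), m < k) ∧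
    (∀ j, u j = ∑ n ∈ A j, a n • e n)

/-- A sequence is semi-normalized if its norms are bounded away from zero and from infinity. -/
def SemiNormalized {X : Type*} [NormedAddCommGroup X] (u : ℕ → X) : Prop :=
  ∃ c C : ℝ, 0 < c ∧ ∀ j, c ≤ ‖u j‖ ∧ ‖u j‖ ≤ C

/-- Two sequences (possibly in different spaces) are equivalent. -/
def SeqEquiv {X Y : Type*} [NormedAddCommGroup X] [NormedSpace ℝ X]
    [NormedAddCommGroup Y] [NormedSpace ℝ Y] (u : ℕ → X) (w : ℕ → Y) : Prop :=
  ∃ C : ℝ, 1 ≤ C ∧ ∀ (a : ℕ → ℝ) (s : Finset ℕ),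
    C⁻¹ * ‖∑ j ∈ s, a j • w j‖ ≤ ‖∑ j ∈ s, a j • u j‖ ∧
    ‖∑ j ∈ s, a j • u j‖ ≤ C * ‖∑ j ∈ s, a j • w j‖

/-- A bounded linear operator is compact if the image of the closed unit ball is
relatively compact. -/
def CompactOp {X Y : Type*} [NormedAddCommGroup X] [NormedSpace ℝ X]
    [NormedAddCommGroup Y] [NormedSpace ℝ Y] (T : Y →L[ℝ] X) : Prop :=
  IsCompact (closure (T '' Metric.closedBall 0 1))

/-- `e` is an unconditional basis of `X`. -/
def IsUncondBasis {X : Type*} [NormedAddCommGroup X] [NormedSpace ℝ X] (e : ℕ → X) : Prop :=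
  (∀ n, e n ≠ 0) ∧ ∀ x : X, ∃! a : ℕ → ℝ, HasSum (fun n => a n • e n) x

/-- `u` is disjointly finitely supported with respect to `e`. -/
def DisjSupported {X : Type*} [NormedAddCommGroup X] [NormedSpace ℝ X]
    (e : ℕ → X) (u : ℕ → X) : Prop :=
  ∃ A : ℕ → Finset ℕ, Pairwise (Function.onFun Disjoint A) ∧
    ∀ j, u j ∈ Submodule.span ℝ (e '' (A j : Set ℕ))

/-- The basis `e` satisfies a lower `q`-estimate. -/
def LowerEstimate {X : Type*} [NormedAddCommGroup X] [NormedSpace ℝ X]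
    (e : ℕ → X) (q : ℝ) : Prop :=
  ∃ C : ℝ, 0 < C ∧ ∀ (m : ℕ) (f : Fin m → X) (A : Fin m → Finset ℕ),
    Pairwise (Function.onFun Disjoint A) →
    (∀ i, f i ∈ Submodule.span ℝ (e '' (A i : Set ℕ))) →
    (∑ i, ‖f i‖ ^ q) ^ (1 / q) ≤ C * ‖∑ i, f i‖

/-- The basis `e` satisfies an upper `q`-estimate. -/
def UpperEstimate {X : Type*} [NormedAddCommGroup X] [NormedSpace ℝ X]
    (e : ℕ → X) (q : ℝ) : Prop :=
  ∃ C : ℝ, 0 < C ∧ ∀ (m : ℕ) (f : Fin m → X) (A : Fin m → Finset ℕ),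
    Pairwise (Function.onFun Disjoint A) →
    (∀ i, f i ∈ Submodule.span ℝ (e '' (A i : Set ℕ))) →
    ‖∑ i, f i‖ ≤ C * (∑ i, ‖f i‖ ^ q) ^ (1 / q)

/-- `u` is equivalent to the canonical basis of `ℓ_q`. -/
def EquivCanonLq {X : Type*} [NormedAddCommGroup X] [NormedSpace ℝ X]
    (u : ℕ → X) (q : ℝ) : Prop :=
  ∃ C : ℝ, 1 ≤ C ∧ ∀ (a : ℕ → ℝ) (s : Finset ℕ),
    C⁻¹ * (∑ j ∈ s, |a j| ^ q) ^ (1 / q) ≤ ‖∑ j ∈ s, a j • u j‖ ∧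
    ‖∑ j ∈ s, a j • u j‖ ≤ C * (∑ j ∈ s, |a j| ^ q) ^ (1 / q)

/-- `Z` contains an isomorphic copy of `ℓ_q`: there is a bounded linear map `J : ℓ_q → Z`
which is bounded below. -/
def ContainsLp (Z : Type*) [NormedAddCommGroup Z] [NormedSpace ℝ Z] (q : ℝ) : Prop :=
  ∃ (J : lp (fun _ : ℕ => ℝ) (ENNReal.ofReal q) →ₗ[ℝ] Z) (C c : ℝ), 0 < c ∧
    ∀ f, ‖J f‖ ≤ C * ‖f‖ ∧ c * ‖f‖ ≤ ‖J f‖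

/-- `T` is strictly singular: it is bounded below on no infinite-dimensional subspace. -/
def StrictlySingular {X Y : Type*} [NormedAddCommGroup X] [NormedSpace ℝ X]
    [NormedAddCommGroup Y] [NormedSpace ℝ Y] (T : Y →L[ℝ] X) : Prop :=
  ∀ (Z : Submodule ℝ Y) (c : ℝ), 0 < c → (∀ z ∈ Z, c * ‖z‖ ≤ ‖T z‖) →
    FiniteDimensional ℝ Z

/-- A finite family of Banach spaces is splitting for unconditional bases. -/
def SplittingFamily {ι : Type*} [Fintype ι] (Z : ι → Type*)
    [∀ i, NormedAddCommGroup (Z i)] [∀ i, NormedSpace ℝ (Z i)] : Prop :=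
  ∀ w : ℕ → (∀ i, Z i), IsUncondBasis w →
    ∃ N : ι → Set ℕ, Pairwise (Function.onFun Disjoint N) ∧ (⋃ i, N i) = Set.univ ∧
      ∀ i, Nonempty ((Submodule.span ℝ (w '' N i)).topologicalClosure ≃L[ℝ] Z i)

/-- A pair of Banach spaces is splitting for unconditional bases. -/
def SplittingPair (U V : Type*) [NormedAddCommGroup U] [NormedSpace ℝ U]
    [NormedAddCommGroup V] [NormedSpace ℝ V] : Prop :=
  ∀ w : ℕ → U × V, IsUncondBasis w →
    ∃ N₁ N₂ : Set ℕ, Disjoint N₁ N₂ ∧ N₁ ∪ N₂ = Set.univ ∧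
      Nonempty ((Submodule.span ℝ (w '' N₁)).topologicalClosure ≃L[ℝ] U) ∧
      Nonempty ((Submodule.span ℝ (w '' N₂)).topologicalClosure ≃L[ℝ] V)

/-- `U` has a unique, up to equivalence and permutation, unconditional basis. -/
def HasUTAPBasis (U : Type*) [NormedAddCommGroup U] [NormedSpace ℝ U] : Prop :=
  ∃ e : ℕ → U, IsUncondBasis e ∧ SemiNormalized e ∧
    ∀ f : ℕ → U, IsUncondBasis f → SemiNormalized f →
      ∃ π : Equiv.Perm ℕ, SeqEquiv (fun n => f (π n)) e

/-- `y` is a subsymmetric basic sequence: semi-normalized, an unconditional basis of its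
closed linear span, and equivalent to all of its subsequences. -/
def IsSubsymmetric {X : Type*} [NormedAddCommGroup X] [NormedSpace ℝ X] (y : ℕ → X) : Prop :=
  SemiNormalized y ∧ (∀ n, y n ≠ 0) ∧
  (∀ x : X, x ∈ (Submodule.span ℝ (Set.range y)).topologicalClosure →
    ∃! a : ℕ → ℝ, HasSum (fun n => a n • y n) x) ∧
  ∀ k : ℕ → ℕ, StrictMono k → SeqEquiv (fun n => y (k n)) y

open Filter Topology ENNReal

theorem Summable.bddAbove_range_norm_finset_sum {ι E : Type*} [NormedAddCommGroup E]
    {f : ι → E} (hf : Summable f) :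
    BddAbove (Set.range fun s : Finset ι => ‖∑ i ∈ s, f i‖) := by
  classical
  obtain ⟨s₀, hs₀⟩ := cauchySeq_finset_iff_vanishing_norm.1 hf.hasSum.cauchySeq 1 one_pos
  refine ⟨∑ i ∈ s₀, ‖f i‖ + 1, ?_⟩
  rintro - ⟨s, rfl⟩
  show ‖∑ i ∈ s, f i‖ ≤ _
  rw [← Finset.sum_inter_add_sum_sdiff s s₀]
  refine (norm_add_le _ _).trans (add_le_add ?_ (hs₀ _ Finset.sdiff_disjoint).le)
  exact (norm_sum_le _ _).trans
    (Finset.sum_le_sum_of_subset_of_nonneg Finset.inter_subset_right fun _ _ _ => norm_nonneg _)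

theorem lp.tendstoUniformly_of_tendsto {α ι E : Type*} [NormedAddCommGroup E] {l : Filter ι}
    {F : ι → lp (fun _ : α => E) ∞} {f : lp (fun _ : α => E) ∞}
    (h : Tendsto F l (𝓝 f)) : TendstoUniformly (fun k i => F k i) (fun i => f i) l := by
  refine Metric.tendstoUniformly_iff.2 fun ε hε => ?_
  filter_upwards [Metric.tendsto_nhds.1 h ε hε] with k hk i
  rw [dist_comm, dist_eq_norm] at hk
  rw [dist_eq_norm]
  exact (lp.norm_apply_le_norm ENNReal.top_ne_zero (f - F k) i).trans_lt hk

namespace IsUncondBasis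

variable {V : Type*} [NormedAddCommGroup V] [NormedSpace ℝ V] {e : ℕ → V}

noncomputable def coeff (he : IsUncondBasis e) : V →ₗ[ℝ] ℕ → ℝ where
  toFun x := (he.2 x).exists.choose
  map_add' x y := (he.2 (x + y)).unique (he.2 (x + y)).exists.choose_spec <| by
    simpa [add_smul] using (he.2 x).exists.choose_spec.add (he.2 y).exists.choose_spec
  map_smul' c x := (he.2 (c • x)).unique (he.2 (c • x)).exists.choose_spec <| by
    simpa [smul_smul] using (he.2 x).exists.choose_spec.const_smul c

variable (he : IsUncondBasis e)

theorem hasSum_coeff (x : V) : HasSum (fun n => he.coeff x n • e n) x :=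
  (he.2 x).exists.choose_spec

theorem coeff_eq_of_hasSum {x : V} {a : ℕ → ℝ} (h : HasSum (fun n => a n • e n) x) :
    he.coeff x = a :=
  (he.2 x).unique (he.hasSum_coeff x) h

noncomputable def partialSums : V →ₗ[ℝ] lp (fun _ : Finset ℕ => V) ∞ where
  toFun x := ⟨fun s => ∑ n ∈ s, he.coeff x n • e n,
    memℓp_infty_iff.2 (he.hasSum_coeff x).summable.bddAbove_range_norm_finset_sum⟩
  map_add' x y := lp.ext <| funext fun s => by
    simp only [map_add, Pi.add_apply, add_smul, Finset.sum_add_distrib]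
    rfl
  map_smul' c x := lp.ext <| funext fun s => by
    simp only [map_smul, Pi.smul_apply, smul_eq_mul, mul_smul, ← Finset.smul_sum]
    rfl

theorem partialSums_apply (x : V) (s : Finset ℕ) :
    he.partialSums x s = ∑ n ∈ s, he.coeff x n • e n := rfl

theorem continuous_partialSums [CompleteSpace V] : Continuous he.partialSums := by
  refine he.partialSums.continuous_of_seq_closed_graph fun u x G hu hG => ?_
  have hunif := lp.tendstoUniformly_of_tendsto hG
  have hG_apply (s : Finset ℕ) :
      Tendsto (fun k => ∑ n ∈ s, he.coeff (u k) n • e n) atTop (𝓝 (G s)) :=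
    hunif.tendsto_at s
  have hline (n : ℕ) : ∃ c : ℝ, c • e n = G {n} :=
    Submodule.mem_span_singleton.1 <|
      (Submodule.span ℝ {e n}).closed_of_finiteDimensional.mem_of_tendsto
        (by simpa using hG_apply {n})
        (Eventually.of_forall fun k => Submodule.smul_mem _ _ (Submodule.mem_span_singleton_self _))
  choose c hc using hline
  have hGs (s : Finset ℕ) : G s = ∑ n ∈ s, c n • e n :=
    tendsto_nhds_unique (hG_apply s) <| by
      simp_rw [hc]
      exact tendsto_finsetSum s fun n _ => by simpa using hG_apply {n}
  -- Moore–Osgood: the uniform limit `G` of the partial-sum nets of `u k` tends to `lim u k = x`.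
  have hsum : HasSum (fun n => c n • e n) x := by
    have := hunif.tendsto_of_eventually_tendsto (p' := atTop)
      (Eventually.of_forall fun k => he.hasSum_coeff (u k)) hu
    simpa [HasSum, hGs] using this
  refine lp.ext (funext fun s => ?_)
  rw [hGs, ← he.coeff_eq_of_hasSum hsum]
  rfl

theorem coeff_basis (j : ℕ) : he.coeff (e j) = Pi.single j 1 :=
  he.coeff_eq_of_hasSum <| by
    simpa using hasSum_single j (f := fun n => (Pi.single j 1 : ℕ → ℝ) n • e n) fun n hn => by
      simp [hn]

noncomputable def toSchauderBasis [CompleteSpace V] : UnconditionalSchauderBasis ℕ ℝ V where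
  basis := e
  coord n := ((LinearMap.proj n).comp he.coeff).mkContinuous
    (‖(⟨he.partialSums, he.continuous_partialSums⟩ : V →L[ℝ] _)‖ / ‖e n‖) fun x => by
      rw [div_mul_eq_mul_div, le_div_iff₀ (norm_pos_iff.2 (he.1 n)), ← norm_smul]
      calc ‖he.coeff x n • e n‖ = ‖he.partialSums x {n}‖ := by simp [partialSums_apply]
        _ ≤ ‖he.partialSums x‖ := lp.norm_apply_le_norm ENNReal.top_ne_zero _ _
        _ ≤ _ := (⟨he.partialSums, he.continuous_partialSums⟩ : V →L[ℝ] _).le_opNorm x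
  ortho i j := (congrFun (he.coeff_basis j) i).trans (by congr)
  expansion := he.hasSum_coeff

@[simp]
theorem coe_toSchauderBasis [CompleteSpace V] : ⇑he.toSchauderBasis = e := rfl

end IsUncondBasis

theorem Filter.Tendsto.tendsto_even_sub_odd {G : Type*} [TopologicalSpace G] [AddGroup G]
    [IsTopologicalAddGroup G] {u : ℕ → G} {l : G} (hu : Tendsto u atTop (𝓝 l)) :
    Tendsto (fun i => u (2 * i) - u (2 * i + 1)) atTop (𝓝 0) := by
  have h₀ : StrictMono fun i : ℕ => 2 * i := fun a b h => by dsimp only; omega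
  have h₁ : StrictMono fun i : ℕ => 2 * i + 1 := fun a b h => by dsimp only; omega
  simpa using (hu.comp h₀.tendsto_atTop).sub (hu.comp h₁.tendsto_atTop)

section NonCompact

variable {X Y : Type*} [NormedAddCommGroup X] [NormedSpace ℝ X]
  [NormedAddCommGroup Y] [NormedSpace ℝ Y]

theorem exists_seq_le_norm_sub_of_not_compactOp [CompleteSpace X] {T : Y →L[ℝ] X}
    (hT : ¬CompactOp T) :
    ∃ δ > 0, ∃ v : ℕ → Y, (∀ k, ‖v k‖ ≤ 1) ∧ Pairwise fun k l => δ ≤ ‖T (v k) - T (v l)‖ := by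
  have hTB : ¬TotallyBounded (T '' Metric.closedBall 0 1) := fun h =>
    hT (h.closure.isCompact_of_isClosed isClosed_closure)
  obtain ⟨δ, hδ, hnet⟩ : ∃ δ > 0, ∀ t : Set X, t.Finite →
      ¬T '' Metric.closedBall 0 1 ⊆ ⋃ x ∈ t, Metric.ball x δ := by
    simpa [Metric.totallyBounded_iff] using hTB
  have : Std.Symm fun v w : Y => δ ≤ ‖T v - T w‖ := ⟨fun v w h => by rwa [norm_sub_rev]⟩
  obtain ⟨v, hv, hsep⟩ := exists_seq_of_forall_finset_exists' (fun v : Y => ‖v‖ ≤ 1)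
    (fun v w => δ ≤ ‖T v - T w‖) fun s _ => by
      obtain ⟨_, ⟨w, hw, rfl⟩, hfar⟩ := Set.not_subset.1 (hnet _ (s.finite_toSet.image T))
      refine ⟨w, by simpa using hw, fun v hv => ?_⟩
      simp only [Set.mem_iUnion, Metric.mem_ball, not_exists, not_lt] at hfar
      simpa [dist_eq_norm, norm_sub_rev] using hfar (T v) ⟨v, hv, rfl⟩
  exact ⟨δ, hδ, v, hv, hsep⟩

theorem GeneralSchauderBasis.exists_strictMono_tendsto_coord {β V : Type*} [Countable β]
    [NormedAddCommGroup V] [NormedSpace ℝ V] {L : SummationFilter β}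
    (b : GeneralSchauderBasis β ℝ V L) {v : ℕ → V} {R : ℝ} (hv : ∀ k, ‖v k‖ ≤ R) :
    ∃ φ : ℕ → ℕ, StrictMono φ ∧ ∃ c : β → ℝ,
      ∀ n, Tendsto (fun k => b.coord n (v (φ k))) atTop (𝓝 (c n)) := by
  have hK : IsCompact (Set.univ.pi fun n => Set.Icc (-(‖b.coord n‖ * R)) (‖b.coord n‖ * R)) :=
    isCompact_univ_pi fun n => isCompact_Icc
  obtain ⟨c, -, φ, hφ, hc⟩ := hK.tendsto_subseq (x := fun k n => b.coord n (v k))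
    fun k n _ => abs_le.1 <| ((b.coord n).le_opNorm (v k)).trans <|
      mul_le_mul_of_nonneg_left (hv k) (norm_nonneg _)
  exact ⟨φ, hφ, c, tendsto_pi_nhds.1 hc⟩

theorem exists_coord_tendsto_zero_of_not_compactOp [CompleteSpace X] {β γ : Type*}
    [Countable β] [Countable γ] {L₁ : SummationFilter β} {L₂ : SummationFilter γ}
    (bY : GeneralSchauderBasis β ℝ Y L₁) (bX : GeneralSchauderBasis γ ℝ X L₂) {T : Y →L[ℝ] X}
    (hT : ¬CompactOp T) :
    ∃ δ > 0, ∃ w : ℕ → Y, (∀ j, ‖w j‖ ≤ 2) ∧ (∀ j, δ ≤ ‖T (w j)‖) ∧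
      (∀ n, Tendsto (fun j => bY.coord n (w j)) atTop (𝓝 0)) ∧
      ∀ n, Tendsto (fun j => bX.coord n (T (w j))) atTop (𝓝 0) := by
  obtain ⟨δ, hδ, v, hv, hsep⟩ := exists_seq_le_norm_sub_of_not_compactOp hT
  obtain ⟨φ₁, hφ₁, c₁, hc₁⟩ := bY.exists_strictMono_tendsto_coord hv
  obtain ⟨φ₂, hφ₂, c₂, hc₂⟩ :=
    bX.exists_strictMono_tendsto_coord fun k => T.le_opNorm_of_le (hv (φ₁ k))
  have hφ : StrictMono (φ₁ ∘ φ₂) := hφ₁.comp hφ₂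
  refine ⟨δ, hδ, fun i => v (φ₁ (φ₂ (2 * i))) - v (φ₁ (φ₂ (2 * i + 1))), fun i => ?_,
    fun i => ?_, fun n => ?_, fun n => ?_⟩
  · exact (norm_sub_le _ _).trans (by linarith [hv (φ₁ (φ₂ (2 * i))), hv (φ₁ (φ₂ (2 * i + 1)))])
  · rw [map_sub]
    exact hsep (hφ.injective.ne (by omega))
  · simpa using ((hc₁ n).comp hφ₂.tendsto_atTop).tendsto_even_sub_odd
  · simpa using (hc₂ n).tendsto_even_sub_odd

end NonCompact

section GlidingHump

variable {V W : Type*} [NormedAddCommGroup V] [NormedSpace ℝ V]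
  [NormedAddCommGroup W] [NormedSpace ℝ W]

theorem UnconditionalSchauderBasis.eventually_norm_sub_proj_Ico_lt
    (b : UnconditionalSchauderBasis ℕ ℝ V) {z : ℕ → V}
    (hz : ∀ n, Tendsto (fun j => b.coord n (z j)) atTop (𝓝 0)) (M : ℕ) {ε : ℝ} (hε : 0 < ε) :
    ∀ᶠ j in atTop, ∀ᶠ N in atTop, ‖z j - b.proj (Finset.Ico M N) (z j)‖ < ε := by
  have hhead : Tendsto (fun j => ‖b.proj (Finset.range M) (z j)‖) atTop (𝓝 0) := by
    simpa using (tendsto_finsetSum (Finset.range M) fun n _ => (hz n).smul_const (b n)).norm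
  filter_upwards [hhead.eventually (gt_mem_nhds (half_pos hε))] with j hj
  have htail : Tendsto (fun N => ‖z j - b.proj (Finset.range N) (z j)‖) atTop (𝓝 0) := by
    simpa [norm_sub_rev] using tendsto_iff_norm_sub_tendsto_zero.1
      ((b.tendsto_proj (z j)).comp tendsto_finset_range)
  filter_upwards [htail.eventually (gt_mem_nhds (half_pos hε)), eventually_ge_atTop M]
    with N hN hMN
  have hIco : b.proj (Finset.Ico M N) (z j) =
      b.proj (Finset.range N) (z j) - b.proj (Finset.range M) (z j) := by
    simp only [GeneralSchauderBasis.proj_apply, Finset.sum_Ico_eq_sub _ hMN]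
  calc ‖z j - b.proj (Finset.Ico M N) (z j)‖
      = ‖(z j - b.proj (Finset.range N) (z j)) + b.proj (Finset.range M) (z j)‖ := by
        rw [hIco, sub_sub_eq_add_sub, add_sub_right_comm]
    _ ≤ ‖z j - b.proj (Finset.range N) (z j)‖ + ‖b.proj (Finset.range M) (z j)‖ :=
        norm_add_le _ _
    _ < ε := by linarith

theorem exists_gliding_hump (b₁ : UnconditionalSchauderBasis ℕ ℝ V)
    (b₂ : UnconditionalSchauderBasis ℕ ℝ W) {z₁ : ℕ → V} {z₂ : ℕ → W}
    (h₁ : ∀ n, Tendsto (fun j => b₁.coord n (z₁ j)) atTop (𝓝 0))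
    (h₂ : ∀ n, Tendsto (fun j => b₂.coord n (z₂ j)) atTop (𝓝 0))
    {η : ℕ → ℝ} (hη : ∀ i, 0 < η i) :
    ∃ j N : ℕ → ℕ, Monotone N ∧ ∀ i,
      ‖z₁ (j i) - b₁.proj (Finset.Ico (N i) (N (i + 1))) (z₁ (j i))‖ < η i ∧
      ‖z₂ (j i) - b₂.proj (Finset.Ico (N i) (N (i + 1))) (z₂ (j i))‖ < η i := by
  have step (i M : ℕ) : ∃ j N, M ≤ N ∧
      ‖z₁ j - b₁.proj (Finset.Ico M N) (z₁ j)‖ < η i ∧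
      ‖z₂ j - b₂.proj (Finset.Ico M N) (z₂ j)‖ < η i := by
    obtain ⟨j, hj₁, hj₂⟩ := ((b₁.eventually_norm_sub_proj_Ico_lt h₁ M (hη i)).and
      (b₂.eventually_norm_sub_proj_Ico_lt h₂ M (hη i))).exists
    obtain ⟨N, hN, hN₁, hN₂⟩ := ((eventually_ge_atTop M).and (hj₁.and hj₂)).exists
    exact ⟨j, N, hN, hN₁, hN₂⟩
  choose j next hnext using step
  let N : ℕ → ℕ := fun i => Nat.rec (motive := fun _ => ℕ) 0 next i
  exact ⟨fun i => j i (N i), N, monotone_nat_of_le_succ fun i => (hnext i (N i)).1,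
    fun i => (hnext i (N i)).2⟩

end GlidingHump

section Estimates

variable {ι : Type*} {q : ℝ}

theorem abs_le_sum_rpow_rpow_inv (hq : 0 < q) (a : ι → ℝ) {s : Finset ι} {i : ι} (hi : i ∈ s) :
    |a i| ≤ (∑ k ∈ s, |a k| ^ q) ^ (1 / q) := by
  calc |a i| = (|a i| ^ q) ^ (1 / q) := by rw [one_div, Real.rpow_rpow_inv (abs_nonneg _) hq.ne']
    _ ≤ _ := Real.rpow_le_rpow (by positivity)
      (Finset.single_le_sum (f := fun k => |a k| ^ q) (fun _ _ => by positivity) hi)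
      (by positivity)

theorem sum_rpow_rpow_inv_le_of_le (hq : 0 < q) {s : Finset ι} {f g : ι → ℝ}
    (hf : ∀ i ∈ s, 0 ≤ f i) (hfg : ∀ i ∈ s, f i ≤ g i) :
    (∑ i ∈ s, f i ^ q) ^ (1 / q) ≤ (∑ i ∈ s, g i ^ q) ^ (1 / q) :=
  Real.rpow_le_rpow (Finset.sum_nonneg fun i hi => Real.rpow_nonneg (hf i hi) q)
    (Finset.sum_le_sum fun i hi => Real.rpow_le_rpow (hf i hi) (hfg i hi) hq.le) (by positivity)

theorem sum_mul_rpow_rpow_inv (hq : 0 < q) {c : ℝ} (hc : 0 ≤ c) (s : Finset ι) (a : ι → ℝ) :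
    (∑ i ∈ s, (c * |a i|) ^ q) ^ (1 / q) = c * (∑ i ∈ s, |a i| ^ q) ^ (1 / q) := by
  simp_rw [Real.mul_rpow hc (abs_nonneg _), ← Finset.mul_sum]
  rw [Real.mul_rpow (by positivity) (by positivity), one_div, Real.rpow_rpow_inv hc hq.ne']

theorem norm_sum_smul_le_sum_mul {V : Type*} [NormedAddCommGroup V] [NormedSpace ℝ V]
    (hq : 0 < q) (a : ι → ℝ) (s : Finset ι) {d : ι → V} {η : ι → ℝ}
    (hd : ∀ i ∈ s, ‖d i‖ ≤ η i) :
    ‖∑ i ∈ s, a i • d i‖ ≤ (∑ i ∈ s, η i) * (∑ i ∈ s, |a i| ^ q) ^ (1 / q) := by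
  rw [Finset.sum_mul]
  refine (norm_sum_le _ _).trans (Finset.sum_le_sum fun i hi => ?_)
  rw [norm_smul, Real.norm_eq_abs, mul_comm]
  exact mul_le_mul (hd i hi) (abs_le_sum_rpow_rpow_inv hq a hi) (abs_nonneg _)
    ((norm_nonneg _).trans (hd i hi))

variable {X : Type*} [NormedAddCommGroup X] [NormedSpace ℝ X] {e : ℕ → X}

theorem DisjSupported.smul {u : ℕ → X} (hu : DisjSupported e u) (a : ℕ → ℝ) :
    DisjSupported e fun i => a i • u i :=
  let ⟨A, hA, hmem⟩ := hu
  ⟨A, hA, fun i => Submodule.smul_mem _ _ (hmem i)⟩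

theorem GeneralSchauderBasis.disjSupported_proj_Ico {V : Type*} [NormedAddCommGroup V]
    [NormedSpace ℝ V] {L : SummationFilter ℕ} (b : GeneralSchauderBasis ℕ ℝ V L) {N : ℕ → ℕ}
    (hN : Monotone N) (x : ℕ → V) :
    DisjSupported ⇑b fun i => b.proj (Finset.Ico (N i) (N (i + 1))) (x i) :=
  ⟨_, fun i i' h => by simpa [← Finset.disjoint_coe] using hN.pairwise_disjoint_on_Ico_succ h,
    fun i => b.range_proj_eq_span _ ▸ LinearMap.mem_range_self _ _⟩

theorem Finset.sum_equivFin_symm {M : Type*} [AddCommMonoid M] (s : Finset ι) (g : ι → M) :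
    ∑ k, g (s.equivFin.symm k) = ∑ i ∈ s, g i :=
  (Equiv.sum_comp s.equivFin.symm fun i : s => g i).trans (Finset.sum_coe_sort s g)

theorem DisjSupported.exists_fin {u : ℕ → X} (hu : DisjSupported e u) (s : Finset ℕ) :
    ∃ A : Fin s.card → Finset ℕ, Pairwise (Function.onFun Disjoint A) ∧
      ∀ k, u (s.equivFin.symm k) ∈ Submodule.span ℝ (e '' (A k : Set ℕ)) :=
  let ⟨A, hA, hmem⟩ := hu
  ⟨fun k => A (s.equivFin.symm k),
    hA.comp_of_injective (Subtype.val_injective.comp s.equivFin.symm.injective), fun _ => hmem _⟩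

theorem LowerEstimate.exists_finset (h : LowerEstimate e q) :
    ∃ C > 0, ∀ u : ℕ → X, DisjSupported e u → ∀ s : Finset ℕ,
      (∑ i ∈ s, ‖u i‖ ^ q) ^ (1 / q) ≤ C * ‖∑ i ∈ s, u i‖ := by
  obtain ⟨C, hC, h⟩ := h
  refine ⟨C, hC, fun u hu s => ?_⟩
  obtain ⟨A, hA, hmem⟩ := hu.exists_fin s
  rw [← Finset.sum_equivFin_symm s u, ← Finset.sum_equivFin_symm s fun i => ‖u i‖ ^ q]
  exact h _ _ A hA hmem

theorem UpperEstimate.exists_finset (h : UpperEstimate e q) :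
    ∃ C > 0, ∀ u : ℕ → X, DisjSupported e u → ∀ s : Finset ℕ,
      ‖∑ i ∈ s, u i‖ ≤ C * (∑ i ∈ s, ‖u i‖ ^ q) ^ (1 / q) := by
  obtain ⟨C, hC, h⟩ := h
  refine ⟨C, hC, fun u hu s => ?_⟩
  obtain ⟨A, hA, hmem⟩ := hu.exists_fin s
  rw [← Finset.sum_equivFin_symm s u, ← Finset.sum_equivFin_symm s fun i => ‖u i‖ ^ q]
  exact h _ _ A hA hmem

end Estimates

section Perturbation

variable {X : Type*} [NormedAddCommGroup X] [NormedSpace ℝ X] {e : ℕ → X} {q C ε : ℝ}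
  {u z : ℕ → X} {η : ℕ → ℝ}

theorem norm_sum_smul_le_of_upper_of_approx
    (hC : ∀ u : ℕ → X, DisjSupported e u → ∀ s : Finset ℕ,
      ‖∑ i ∈ s, u i‖ ≤ C * (∑ i ∈ s, ‖u i‖ ^ q) ^ (1 / q))
    (hC0 : 0 ≤ C) (hq : 0 < q) (hu : DisjSupported e u) (hzu : ∀ i, ‖z i - u i‖ ≤ η i)
    (hη : ∀ s : Finset ℕ, ∑ i ∈ s, η i ≤ ε) {R : ℝ} (hz : ∀ i, ‖z i‖ ≤ R)
    (a : ℕ → ℝ) (s : Finset ℕ) :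
    ‖∑ i ∈ s, a i • z i‖ ≤ (C * (R + ε) + ε) * (∑ i ∈ s, |a i| ^ q) ^ (1 / q) := by
  have hε : 0 ≤ ε := by simpa using hη ∅
  have hRε : 0 ≤ R + ε := by linarith [(norm_nonneg _).trans (hz 0)]
  have hσ : 0 ≤ (∑ i ∈ s, |a i| ^ q) ^ (1 / q) := by positivity
  have hblock : ‖∑ i ∈ s, a i • u i‖ ≤ C * ((R + ε) * (∑ i ∈ s, |a i| ^ q) ^ (1 / q)) := by
    refine (hC _ (hu.smul a) s).trans (mul_le_mul_of_nonneg_left ?_ hC0)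
    rw [← sum_mul_rpow_rpow_inv hq hRε]
    refine sum_rpow_rpow_inv_le_of_le hq (fun _ _ => norm_nonneg _) fun i _ => ?_
    rw [norm_smul, Real.norm_eq_abs, mul_comm]
    refine mul_le_mul_of_nonneg_right ?_ (abs_nonneg _)
    linarith [norm_sub_norm_le (u i) (z i), norm_sub_rev (u i) (z i), hzu i, hz i,
      show η i ≤ ε by simpa using hη {i}]
  have herr := norm_sum_smul_le_sum_mul hq a s fun i _ => hzu i
  calc ‖∑ i ∈ s, a i • z i‖
      = ‖∑ i ∈ s, a i • u i + ∑ i ∈ s, a i • (z i - u i)‖ := by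
        simp [smul_sub, Finset.sum_sub_distrib]
    _ ≤ ‖∑ i ∈ s, a i • u i‖ + ‖∑ i ∈ s, a i • (z i - u i)‖ := norm_add_le _ _
    _ ≤ (C * (R + ε) + ε) * (∑ i ∈ s, |a i| ^ q) ^ (1 / q) := by
        linarith [mul_le_mul_of_nonneg_right (hη s) hσ]

theorem le_norm_sum_smul_of_lower_of_approx
    (hC : ∀ u : ℕ → X, DisjSupported e u → ∀ s : Finset ℕ,
      (∑ i ∈ s, ‖u i‖ ^ q) ^ (1 / q) ≤ C * ‖∑ i ∈ s, u i‖)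
    (hC0 : 0 < C) (hq : 0 < q) (hu : DisjSupported e u) (hzu : ∀ i, ‖z i - u i‖ ≤ η i)
    (hη : ∀ s : Finset ℕ, ∑ i ∈ s, η i ≤ ε) {r : ℝ} (hz : ∀ i, r ≤ ‖z i‖) (hεr : ε ≤ r)
    (a : ℕ → ℝ) (s : Finset ℕ) :
    ((r - ε) / C - ε) * (∑ i ∈ s, |a i| ^ q) ^ (1 / q) ≤ ‖∑ i ∈ s, a i • z i‖ := by
  have hσ : 0 ≤ (∑ i ∈ s, |a i| ^ q) ^ (1 / q) := by positivity
  have hblock : (r - ε) * (∑ i ∈ s, |a i| ^ q) ^ (1 / q) ≤ C * ‖∑ i ∈ s, a i • u i‖ := by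
    refine le_trans ?_ (hC _ (hu.smul a) s)
    rw [← sum_mul_rpow_rpow_inv hq (sub_nonneg.2 hεr)]
    refine sum_rpow_rpow_inv_le_of_le hq (fun i _ => mul_nonneg (sub_nonneg.2 hεr) (abs_nonneg _))
      fun i _ => ?_
    rw [norm_smul, Real.norm_eq_abs, mul_comm (r - ε)]
    refine mul_le_mul_of_nonneg_left ?_ (abs_nonneg _)
    linarith [norm_sub_norm_le (z i) (u i), hzu i, hz i, show η i ≤ ε by simpa using hη {i}]
  have herr := norm_sum_smul_le_sum_mul hq a s fun i _ => hzu i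
  have hu_le : ‖∑ i ∈ s, a i • u i‖ ≤ ‖∑ i ∈ s, a i • z i‖ + ‖∑ i ∈ s, a i • (z i - u i)‖ := by
    refine (norm_sub_le _ _).trans_eq' ?_
    simp [smul_sub, Finset.sum_sub_distrib]
  have hdiv : (r - ε) / C * (∑ i ∈ s, |a i| ^ q) ^ (1 / q) ≤ ‖∑ i ∈ s, a i • u i‖ := by
    rw [div_mul_eq_mul_div, div_le_iff₀ hC0]
    linarith
  rw [sub_mul]
  linarith [mul_le_mul_of_nonneg_right (hη s) hσ]

end Perturbation

section StrictlySingular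

variable {X Y : Type*} [NormedAddCommGroup X] [NormedSpace ℝ X]
  [NormedAddCommGroup Y] [NormedSpace ℝ Y] {T : Y →L[ℝ] X} {q : ℝ}

theorem not_strictlySingular_of_lq_bounds (hq : 0 < q) {z : ℕ → Y} {A c : ℝ} (hc : 0 < c)
    (hup : ∀ (a : ℕ → ℝ) (s : Finset ℕ),
      ‖∑ i ∈ s, a i • z i‖ ≤ A * (∑ i ∈ s, |a i| ^ q) ^ (1 / q))
    (hlow : ∀ (a : ℕ → ℝ) (s : Finset ℕ),
      c * (∑ i ∈ s, |a i| ^ q) ^ (1 / q) ≤ ‖T (∑ i ∈ s, a i • z i)‖) :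
    ¬StrictlySingular T := by
  intro hT
  have hA : 0 < max A 1 := lt_max_of_lt_right one_pos
  have hbelow : ∀ y ∈ Submodule.span ℝ (Set.range z), c / max A 1 * ‖y‖ ≤ ‖T y‖ := by
    intro y hy
    obtain ⟨a, rfl⟩ := Finsupp.mem_span_range_iff_exists_finsupp.1 hy
    have hσ : 0 ≤ (∑ i ∈ a.support, |a i| ^ q) ^ (1 / q) := by positivity
    calc c / max A 1 * ‖∑ i ∈ a.support, a i • z i‖
        ≤ c / max A 1 * (max A 1 * (∑ i ∈ a.support, |a i| ^ q) ^ (1 / q)) :=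
          mul_le_mul_of_nonneg_left ((hup a a.support).trans
            (mul_le_mul_of_nonneg_right (le_max_left _ _) hσ)) (by positivity)
      _ = c * (∑ i ∈ a.support, |a i| ^ q) ^ (1 / q) := by field_simp
      _ ≤ _ := hlow a a.support
  have hli : LinearIndependent ℝ z := by
    refine linearIndependent_iff'.2 fun s a hsum i hi => ?_
    have h := hlow a s
    rw [hsum, map_zero, norm_zero] at h
    exact abs_nonpos_iff.1 ((abs_le_sum_rpow_rpow_inv hq a hi).trans
      (nonpos_of_mul_nonpos_right h hc))
  have := hT _ _ (by positivity) hbelow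
  have := (linearIndependent_span hli).finite
  exact not_finite ℕ

theorem not_strictlySingular_of_coord_tendsto_zero (hq : 0 < q)
    (bX : UnconditionalSchauderBasis ℕ ℝ X) (bY : UnconditionalSchauderBasis ℕ ℝ Y)
    (hlow : LowerEstimate ⇑bX q) (hup : UpperEstimate ⇑bY q) {w : ℕ → Y} {R δ : ℝ}
    (hδ : 0 < δ) (hw : ∀ j, ‖w j‖ ≤ R) (hTw : ∀ j, δ ≤ ‖T (w j)‖)
    (hwY : ∀ n, Tendsto (fun j => bY.coord n (w j)) atTop (𝓝 0))
    (hwX : ∀ n, Tendsto (fun j => bX.coord n (T (w j))) atTop (𝓝 0)) :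
    ¬StrictlySingular T := by
  obtain ⟨CX, hCX, hCXlow⟩ := hlow.exists_finset
  obtain ⟨CY, hCY, hCYup⟩ := hup.exists_finset
  -- chosen so that the lower constant `(δ - ε) / CX - ε` below equals `δ / (2 * CX)`
  set ε := δ / (2 * (CX + 1))
  have hε : 0 < ε := by positivity
  have hη (s : Finset ℕ) : ∑ i ∈ s, ε / 2 / 2 ^ i ≤ ε :=
    sum_le_hasSum s (fun _ _ => by positivity) (hasSum_geometric_two' ε)
  obtain ⟨j, N, hN, happrox⟩ := exists_gliding_hump bY bX hwY hwX (η := fun i => ε / 2 / 2 ^ i)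
    fun i => by positivity
  have hεCX : ε * CX + ε = δ / 2 := by
    simp only [ε]
    field_simp
  refine not_strictlySingular_of_lq_bounds hq (z := w ∘ j) (c := (δ - ε) / CX - ε) ?_
    (norm_sum_smul_le_of_upper_of_approx hCYup hCY.le hq (bY.disjSupported_proj_Ico hN (w ∘ j))
      (fun i => (happrox i).1.le) hη fun i => hw (j i)) fun a s => ?_
  · rw [sub_pos, lt_div_iff₀ hCX]
    linarith
  · rw [map_sum]
    simp only [map_smul]
    exact le_norm_sum_smul_of_lower_of_approx hCXlow hCX hq
      (bX.disjSupported_proj_Ico hN (T ∘ w ∘ j)) (fun i => (happrox i).2.le) hη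
      (fun i => hTw (j i)) (div_le_self hδ.le (by linarith)) a s

end StrictlySingular

theorem statement6 {X Y : Type*} [NormedAddCommGroup X] [NormedSpace ℝ X] [CompleteSpace X]
    [NormedAddCommGroup Y] [NormedSpace ℝ Y] [CompleteSpace Y]
    (q : ℝ) (hq : 1 ≤ q)
    (e : ℕ → X) (he : IsUncondBasis e) (hlow : LowerEstimate e q)
    (y : ℕ → Y) (hy : IsUncondBasis y) (hup : UpperEstimate y q)
    (T : Y →L[ℝ] X) (hss : StrictlySingular T) :
    CompactOp T := by
  by_contra hT
  obtain ⟨δ, hδ, w, hw, hTw, hwY, hwX⟩ :=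
    exists_coord_tendsto_zero_of_not_compactOp hy.toSchauderBasis he.toSchauderBasis hT
  exact not_strictlySingular_of_coord_tendsto_zero (zero_lt_one.trans_le hq) he.toSchauderBasis
    hy.toSchauderBasis (by simpa using hlow) (by simpa using hup) hδ hw hTw hwY hwX hss
end

section
/- Let X be a real Banach space with an unconditional basis (e_n)_{n∈ℕ} satisfying a lower 1-estimate and let Y be any real Banach space. Then every strictly singular bounded linear operator T : Y → X is compact. -/
open scoped BigOperators

/-!
Coefficient functionals are bounded (lower estimate on singletons), so from a bounded sequence
one extracts a subsequence whose coefficients converge coordinatewise. If `T` were not compact,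
some `T yₖ` would be `ε`-separated; after that extraction, differences of consecutive terms are
small on any fixed initial segment of the basis, so a gliding hump yields differences `T zⱼ`
that are `2η`-close to disjointly supported blocks of norm at least `ε - 2η`. The lower
1-estimate makes such blocks equivalent to the unit vector basis of `ℓ₁`, hence so are the
`T zⱼ`, and `T` is bounded below on the infinite-dimensional span of the bounded `zⱼ`.
-/

open Filter Topology Finset

lemma exists_seq_le_dist_of_not_totallyBounded {α : Type*} [PseudoMetricSpace α] {s : Set α}
    (hs : ¬TotallyBounded s) :
    ∃ ε > 0, ∃ u : ℕ → α, (∀ n, u n ∈ s) ∧ ∀ m n, m < n → ε ≤ dist (u m) (u n) := by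
  rw [Metric.totallyBounded_iff] at hs
  push Not at hs
  obtain ⟨ε, hε, hcover⟩ := hs
  refine ⟨ε, hε, exists_seq_of_forall_finset_exists (· ∈ s) (fun x y => ε ≤ dist x y)
    fun t _ => ?_⟩
  obtain ⟨y, hys, hy⟩ := Set.not_subset.mp (hcover t t.finite_toSet)
  refine ⟨y, hys, fun x hx => ?_⟩
  by_contra! hlt
  exact hy (Set.mem_biUnion hx (Metric.mem_ball'.mpr hlt))

lemma exists_subseq_tendsto_of_abs_le {f : ℕ → ℕ → ℝ} {M : ℕ → ℝ}
    (hf : ∀ k n, |f k n| ≤ M n) :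
    ∃ φ : ℕ → ℕ, StrictMono φ ∧ ∃ L : ℕ → ℝ,
      ∀ n, Tendsto (fun k => f (φ k) n) atTop (𝓝 (L n)) := by
  have hmem : ∀ k, f k ∈ Set.univ.pi fun n => Set.Icc (-M n) (M n) :=
    fun k n _ => abs_le.mp (hf k n)
  obtain ⟨L, -, φ, hφ, hL⟩ := (isCompact_univ_pi fun n => isCompact_Icc).tendsto_subseq hmem
  exact ⟨φ, hφ, L, tendsto_pi_nhds.mp hL⟩

section HasSum

variable {E : Type*} [NormedAddCommGroup E]

lemma HasSum.norm_le_of_forall_sum_norm_le {ι : Type*} {g : ι → E} {x : E} (hg : HasSum g x)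
    {C : ℝ} (h : ∀ t : Finset ι, ∑ i ∈ t, ‖g i‖ ≤ C * ‖∑ i ∈ t, g i‖) (i : ι) :
    ‖g i‖ ≤ C * ‖x‖ := by
  refine ge_of_tendsto (hg.norm.const_mul C) ?_
  filter_upwards [eventually_ge_atTop {i}] with t hit
  exact (single_le_sum (fun j _ => norm_nonneg (g j)) (singleton_subset_iff.mp hit)).trans (h t)

lemma HasSum.exists_norm_sub_sum_Ico_le {g : ℕ → E} {x : E} (hg : HasSum g x) (N : ℕ) {η : ℝ}
    (hη : 0 < η) : ∃ N' > N, ‖x - ∑ n ∈ Ico N N', g n‖ ≤ ‖∑ n ∈ range N, g n‖ + η := by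
  obtain ⟨N', hN', hNN'⟩ := ((hg.tendsto_sum_nat.eventually (Metric.ball_mem_nhds x hη)).and
    (eventually_gt_atTop N)).exists
  refine ⟨N', hNN', ?_⟩
  rw [sum_Ico_eq_sub _ hNN'.le, ← sub_add]
  refine (norm_add_le _ _).trans ?_
  rw [dist_eq_norm'] at hN'
  linarith

end HasSum

section L1LowerBound

variable {X : Type*} [NormedAddCommGroup X] [NormedSpace ℝ X]

def HasL1LowerBound {ι : Type*} (v : ι → X) (β : ℝ) : Prop :=
  ∀ (c : ι → ℝ) (s : Finset ι), β * ∑ j ∈ s, |c j| ≤ ‖∑ j ∈ s, c j • v j‖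

variable {ι : Type*} {u v : ι → X} {β γ : ℝ}

lemma HasL1LowerBound.of_norm_sub_le (h : HasL1LowerBound u β) (huv : ∀ j, ‖v j - u j‖ ≤ γ) :
    HasL1LowerBound v (β - γ) := by
  intro c s
  have hdiff : ‖∑ j ∈ s, c j • v j - ∑ j ∈ s, c j • u j‖ ≤ γ * ∑ j ∈ s, |c j| := by
    rw [← sum_sub_distrib, mul_sum]
    refine (norm_sum_le _ _).trans (sum_le_sum fun j _ => ?_)
    rw [← smul_sub, norm_smul, Real.norm_eq_abs, mul_comm]
    exact mul_le_mul_of_nonneg_right (huv j) (abs_nonneg _)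
  have htri := norm_sub_norm_le (∑ j ∈ s, c j • u j) (∑ j ∈ s, c j • v j)
  rw [norm_sub_rev] at htri
  linarith [h c s, sub_mul β γ (∑ j ∈ s, |c j|)]

lemma HasL1LowerBound.linearIndependent (h : HasL1LowerBound v β) (hβ : 0 < β) :
    LinearIndependent ℝ v := by
  rw [linearIndependent_iff']
  intro s c hc j hj
  have hzero : ∑ i ∈ s, |c i| = 0 := by
    have := h c s
    rw [hc, norm_zero] at this
    exact le_antisymm (nonpos_of_mul_nonpos_right this hβ) (sum_nonneg fun i _ => abs_nonneg _)
  exact abs_eq_zero.mp ((sum_eq_zero_iff_of_nonneg fun i _ => abs_nonneg _).mp hzero j hj)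

lemma not_strictlySingular_of_hasL1LowerBound {Y : Type*} [NormedAddCommGroup Y]
    [NormedSpace ℝ Y] (T : Y →L[ℝ] X) [Infinite ι] {z : ι → Y} {R : ℝ} (hR : 0 < R)
    (hz : ∀ j, ‖z j‖ ≤ R) (hβ : 0 < β) (h : HasL1LowerBound (fun j => T (z j)) β) :
    ¬StrictlySingular T := by
  intro hss
  set Z := Submodule.span ℝ (Set.range z)
  have hbelow : ∀ w ∈ Z, β / R * ‖w‖ ≤ ‖T w‖ := by
    intro w hw
    obtain ⟨c, rfl⟩ := Finsupp.mem_span_range_iff_exists_finsupp.mp hw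
    have hnorm : ‖∑ j ∈ c.support, c j • z j‖ ≤ R * ∑ j ∈ c.support, |c j| := by
      rw [mul_sum]
      refine (norm_sum_le _ _).trans (sum_le_sum fun j _ => ?_)
      rw [norm_smul, Real.norm_eq_abs, mul_comm]
      exact mul_le_mul_of_nonneg_right (hz j) (abs_nonneg _)
    calc β / R * ‖∑ j ∈ c.support, c j • z j‖ ≤ β / R * (R * ∑ j ∈ c.support, |c j|) :=
          mul_le_mul_of_nonneg_left hnorm (by positivity)
      _ = β * ∑ j ∈ c.support, |c j| := by field_simp
      _ ≤ ‖∑ j ∈ c.support, c j • T (z j)‖ := h c c.support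
      _ = ‖T (∑ j ∈ c.support, c j • z j)‖ := by simp only [map_sum, map_smul]
  have : FiniteDimensional ℝ Z := hss Z (β / R) (by positivity) hbelow
  have hli : LinearIndependent ℝ fun j => (⟨z j, Submodule.subset_span ⟨j, rfl⟩⟩ : Z) :=
    .of_comp Z.subtype (.of_comp (T : Y →ₗ[ℝ] X) (h.linearIndependent hβ))
  exact Module.Finite.not_linearIndependent_of_infinite _ hli

end L1LowerBound

section LowerOneEstimate

variable {X : Type*} [NormedAddCommGroup X] [NormedSpace ℝ X]

def LowerOneEstimateWith (e : ℕ → X) (C : ℝ) : Prop :=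
  ∀ A : ℕ → Finset ℕ, Pairwise (Function.onFun Disjoint A) → ∀ u : ℕ → X,
    (∀ j, u j ∈ Submodule.span ℝ (e '' (A j : Set ℕ))) →
    ∀ s : Finset ℕ, ∑ j ∈ s, ‖u j‖ ≤ C * ‖∑ j ∈ s, u j‖

variable {e : ℕ → X} {C : ℝ}

lemma LowerEstimate.exists_lowerOneEstimateWith (h : LowerEstimate e 1) :
    ∃ C, 0 < C ∧ LowerOneEstimateWith e C := by
  obtain ⟨C, hC, hlow⟩ := h
  refine ⟨C, hC, fun A hA u hu s => ?_⟩
  set σ := s.equivFin.symm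
  have key := hlow s.card (fun i => u (σ i)) (fun i => A (σ i))
    (hA.comp_of_injective (Subtype.val_injective.comp σ.injective)) fun i => hu _
  simpa only [Real.rpow_one, div_one, Equiv.sum_comp σ (fun j : s => ‖u j‖),
    Equiv.sum_comp σ (fun j : s => u j), univ_eq_attach, sum_attach s (fun j => ‖u j‖),
    sum_attach] using key

namespace LowerOneEstimateWith

lemma sum_norm_smul_le (h : LowerOneEstimateWith e C) (b : ℕ → ℝ) (t : Finset ℕ) :
    ∑ n ∈ t, ‖b n • e n‖ ≤ C * ‖∑ n ∈ t, b n • e n‖ :=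
  h (fun n => {n}) (fun i j hij => by simpa using hij) _
    (fun n => Submodule.smul_mem _ _ (Submodule.subset_span ⟨n, by simp, rfl⟩)) t

lemma abs_coeff_le (h : LowerOneEstimateWith e C) (hC : 0 ≤ C) {n : ℕ} (hn : e n ≠ 0)
    {a : ℕ → ℝ} {x : X} (hx : HasSum (fun n => a n • e n) x) {R : ℝ} (hxR : ‖x‖ ≤ R) :
    |a n| ≤ C * R / ‖e n‖ := by
  rw [le_div_iff₀ (norm_pos_iff.mpr hn)]
  have := hx.norm_le_of_forall_sum_norm_le (h.sum_norm_smul_le a) n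
  rw [norm_smul, Real.norm_eq_abs] at this
  exact this.trans (mul_le_mul_of_nonneg_left hxR hC)

lemma hasL1LowerBound (h : LowerOneEstimateWith e C) (hC : 0 < C) {A : ℕ → Finset ℕ}
    (hA : Pairwise (Function.onFun Disjoint A)) {u : ℕ → X}
    (hu : ∀ j, u j ∈ Submodule.span ℝ (e '' (A j : Set ℕ))) {m : ℝ} (hm : ∀ j, m ≤ ‖u j‖) :
    HasL1LowerBound u (m / C) := by
  intro c s
  rw [div_mul_eq_mul_div, div_le_iff₀' hC]
  calc m * ∑ j ∈ s, |c j| ≤ ∑ j ∈ s, ‖c j • u j‖ := by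
        rw [mul_sum]
        refine sum_le_sum fun j _ => ?_
        rw [norm_smul, Real.norm_eq_abs, mul_comm]
        exact mul_le_mul_of_nonneg_left (hm j) (abs_nonneg _)
    _ ≤ C * ‖∑ j ∈ s, c j • u j‖ := h A hA _ (fun j => Submodule.smul_mem _ _ (hu j)) s

end LowerOneEstimateWith

variable {x : ℕ → X} {a : ℕ → ℕ → ℝ} {L : ℕ → ℝ}

lemma exists_sub_succ_near_block (ha : ∀ k, HasSum (fun n => a k n • e n) (x k))
    (hL : ∀ n, Tendsto (fun k => a k n) atTop (𝓝 (L n))) {η : ℝ} (hη : 0 < η) (N : ℕ) :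
    ∃ k N', N < N' ∧ ∃ u ∈ Submodule.span ℝ (e '' (Ico N N' : Set ℕ)),
      ‖(x (k + 1) - x k) - u‖ ≤ 2 * η := by
  have hcauchy : CauchySeq fun k => ∑ n ∈ range N, a k n • e n :=
    (tendsto_finsetSum _ fun n _ => (hL n).smul_const (e n)).cauchySeq
  obtain ⟨k, hk⟩ := Metric.cauchySeq_iff'.mp hcauchy η hη
  have hhead : ‖∑ n ∈ range N, (a (k + 1) n - a k n) • e n‖ < η := by
    simpa only [dist_eq_norm, sub_smul, sum_sub_distrib] using hk (k + 1) k.le_succ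
  have hdiff : HasSum (fun n => (a (k + 1) n - a k n) • e n) (x (k + 1) - x k) := by
    simpa only [sub_smul] using (ha (k + 1)).sub (ha k)
  obtain ⟨N', hNN', hN'⟩ := hdiff.exists_norm_sub_sum_Ico_le N hη
  exact ⟨k, N', hNN', _, Submodule.sum_mem _ fun n hn =>
    Submodule.smul_mem _ _ (Submodule.subset_span ⟨n, hn, rfl⟩), by linarith⟩

lemma LowerOneEstimateWith.exists_hasL1LowerBound_sub (h : LowerOneEstimateWith e C)
    (hC : 0 < C) (ha : ∀ k, HasSum (fun n => a k n • e n) (x k))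
    (hL : ∀ n, Tendsto (fun k => a k n) atTop (𝓝 (L n))) {ε : ℝ} (hε : 0 < ε)
    (hsep : ∀ k, ε ≤ ‖x (k + 1) - x k‖) :
    ∃ K : ℕ → ℕ, ∃ β > 0, HasL1LowerBound (fun j => x (K j + 1) - x (K j)) β := by
  obtain ⟨η, hη, hηε⟩ : ∃ η > 0, 2 * η * (C + 1) < ε :=
    ⟨ε / (4 * (C + 1)), by positivity, by field_simp; linarith⟩
  choose k next hnext u hu hxu using exists_sub_succ_near_block ha hL hη
  set N : ℕ → ℕ := fun j => next^[j] 0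
  have hN_succ : ∀ j, N (j + 1) = next (N j) := fun j => Function.iterate_succ_apply' _ _ _
  have hN : StrictMono N := strictMono_nat_of_lt_succ fun j => hN_succ j ▸ hnext (N j)
  have hdisj : Pairwise (Function.onFun Disjoint fun j => Ico (N j) (N (j + 1))) := fun i j hij =>
    disjoint_coe.mp (by simpa using hN.monotone.pairwise_disjoint_on_Ico_succ hij)
  have hblocks : HasL1LowerBound (fun j => u (N j)) ((ε - 2 * η) / C) :=
    h.hasL1LowerBound hC hdisj (fun j => hN_succ j ▸ hu (N j)) fun j => by
      linarith [hsep (k (N j)), hxu (N j),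
        norm_le_norm_add_norm_sub' (x (k (N j) + 1) - x (k (N j))) (u (N j))]
  refine ⟨fun j => k (N j), (ε - 2 * η) / C - 2 * η, ?_,
    hblocks.of_norm_sub_le fun j => hxu (N j)⟩
  rw [gt_iff_lt, sub_pos, lt_div_iff₀ hC]
  linarith

end LowerOneEstimate

lemma exists_separated_of_not_compactOp {X Y : Type*} [NormedAddCommGroup X] [NormedSpace ℝ X]
    [CompleteSpace X] [NormedAddCommGroup Y] [NormedSpace ℝ Y] {T : Y →L[ℝ] X}
    (hT : ¬CompactOp T) :
    ∃ ε > 0, ∃ y : ℕ → Y, (∀ k, ‖y k‖ ≤ 1) ∧ ∀ m n, m < n → ε ≤ ‖T (y n) - T (y m)‖ := by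
  have hTB : ¬TotallyBounded (T '' Metric.closedBall 0 1) := fun hTB =>
    hT (hTB.closure.isCompact_of_isClosed isClosed_closure)
  obtain ⟨ε, hε, v, hv, hsep⟩ := exists_seq_le_dist_of_not_totallyBounded hTB
  choose y hy hTy using hv
  refine ⟨ε, hε, y, fun k => by simpa using hy k, fun m n hmn => ?_⟩
  simpa only [hTy, dist_eq_norm'] using hsep m n hmn

theorem statement7_general {X Y : Type*} [NormedAddCommGroup X] [NormedSpace ℝ X] [CompleteSpace X]
    [NormedAddCommGroup Y] [NormedSpace ℝ Y]
    (e : ℕ → X) (he : IsUncondBasis e) (hlow : LowerEstimate e 1)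
    (T : Y →L[ℝ] X) (hss : StrictlySingular T) :
    CompactOp T := by
  obtain ⟨C, hC, hlowC⟩ := hlow.exists_lowerOneEstimateWith
  by_contra hT
  obtain ⟨ε, hε, y, hy, hsep⟩ := exists_separated_of_not_compactOp hT
  choose a ha using fun k => (he.2 (T (y k))).exists
  obtain ⟨φ, hφ, L, hL⟩ := exists_subseq_tendsto_of_abs_le fun k n =>
    hlowC.abs_coeff_le hC.le (he.1 n) (ha k) (T.le_opNorm_of_le (hy k))
  obtain ⟨K, β, hβ, hK⟩ := hlowC.exists_hasL1LowerBound_sub hC (fun k => ha (φ k)) hL hε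
    fun k => hsep _ _ (hφ k.lt_succ_self)
  have hz : ∀ j, ‖y (φ (K j + 1)) - y (φ (K j))‖ ≤ 2 := fun j =>
    (norm_sub_le _ _).trans (by linarith [hy (φ (K j + 1)), hy (φ (K j))])
  refine not_strictlySingular_of_hasL1LowerBound T two_pos hz hβ ?_ hss
  simpa only [map_sub] using hK

theorem statement7 {X Y : Type*} [NormedAddCommGroup X] [NormedSpace ℝ X] [CompleteSpace X]
    [NormedAddCommGroup Y] [NormedSpace ℝ Y] [CompleteSpace Y]
    (e : ℕ → X) (he : IsUncondBasis e) (hlow : LowerEstimate e 1)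
    (T : Y →L[ℝ] X) (hss : StrictlySingular T) :
    CompactOp T :=
  statement7_general e he hlow T hss
end

section
/- Let 1 ≤ q < ∞. Let X be a real Banach space with an unconditional basis (e_n)_{n∈ℕ} satisfying a lower q-estimate, and let Y be a real Banach space with an unconditional basis (y_n)_{n∈ℕ} satisfying an upper q-estimate. Suppose that X contains no isomorphic copy of ℓ_q or Y contains no isomorphic copy of ℓ_q. Then every bounded linear operator from Y into X is compact. -/
open scoped BigOperators

open Filter Topology


namespace S8

variable {X : Type*} [NormedAddCommGroup X] [NormedSpace ℝ X]

lemma bddAbove_psum {e : ℕ → X} {a : ℕ → ℝ} {x : X}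
    (hx : HasSum (fun n => a n • e n) x) :
    BddAbove (Set.range fun s : Finset ℕ => ‖∑ n ∈ s, a n • e n‖) := by
  have h1 : ∀ᶠ s : Finset ℕ in atTop, ‖∑ n ∈ s, a n • e n - x‖ < 1 := by
    have := Metric.tendsto_nhds.mp hx 1 one_pos
    simpa [dist_eq_norm] using this
  obtain ⟨s₀, hs₀⟩ := Filter.eventually_atTop.mp h1
  refine ⟨1 + ‖x‖ + ∑ n ∈ s₀, ‖a n • e n‖, ?_⟩
  rintro r ⟨s, rfl⟩
  have key : ∑ n ∈ s, a n • e n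
      = ∑ n ∈ (s ∪ s₀), a n • e n - ∑ n ∈ (s₀ \ s), a n • e n := by
    rw [← Finset.union_sdiff_self_eq_union, Finset.sum_union Finset.disjoint_sdiff]
    abel
  have h2 : ‖∑ n ∈ (s ∪ s₀), a n • e n‖ ≤ 1 + ‖x‖ := by
    have := hs₀ (s ∪ s₀) (Finset.le_iff_subset.mpr Finset.subset_union_right)
    calc ‖∑ n ∈ (s ∪ s₀), a n • e n‖
        = ‖(∑ n ∈ (s ∪ s₀), a n • e n - x) + x‖ := by rw [sub_add_cancel]
      _ ≤ ‖∑ n ∈ (s ∪ s₀), a n • e n - x‖ + ‖x‖ := norm_add_le _ _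
      _ ≤ 1 + ‖x‖ := by linarith
  have h3 : ‖∑ n ∈ (s₀ \ s), a n • e n‖ ≤ ∑ n ∈ s₀, ‖a n • e n‖ :=
    (norm_sum_le _ _).trans (Finset.sum_le_sum_of_subset_of_nonneg
      (Finset.sdiff_subset) (fun _ _ _ => norm_nonneg _))
  calc ‖∑ n ∈ s, a n • e n‖ ≤ ‖∑ n ∈ (s ∪ s₀), a n • e n‖ + ‖∑ n ∈ (s₀ \ s), a n • e n‖ := by
        rw [key]; exact norm_sub_le _ _
    _ ≤ 1 + ‖x‖ + ∑ n ∈ s₀, ‖a n • e n‖ := by linarith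

def coefSub (e : ℕ → X) : Submodule ℝ (ℕ → ℝ) where
  carrier := {a | (∃ x, HasSum (fun n => a n • e n) x) ∧ ∀ n, e n = 0 → a n = 0}
  zero_mem' := ⟨⟨0, by simpa using hasSum_zero⟩, fun n _ => rfl⟩
  add_mem' := by
    rintro a b ⟨⟨x, hx⟩, hz⟩ ⟨⟨x', hx'⟩, hz'⟩
    exact ⟨⟨x + x', by simpa [add_smul] using hx.add hx'⟩,
      fun n h => by simp [Pi.add_apply, hz n h, hz' n h]⟩
  smul_mem' := by
    rintro c a ⟨⟨x, hx⟩, hz⟩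
    refine ⟨⟨c • x, ?_⟩, fun n h => by simp [hz n h]⟩
    have := hx.const_smul c
    simpa [smul_smul] using this

structure CoefSeq (e : ℕ → X) where
  toFun : ℕ → ℝ
  mem' : toFun ∈ coefSub e

namespace CoefSeq

variable {e : ℕ → X}

lemma toFun_injective : Function.Injective (toFun : CoefSeq e → (ℕ → ℝ)) := by
  rintro ⟨a, _⟩ ⟨b, _⟩ h; simpa using h

instance : Zero (CoefSeq e) := ⟨⟨0, (coefSub e).zero_mem⟩⟩
instance : Add (CoefSeq e) := ⟨fun A B => ⟨A.1 + B.1, (coefSub e).add_mem A.2 B.2⟩⟩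
instance : Neg (CoefSeq e) := ⟨fun A => ⟨-A.1, (coefSub e).neg_mem A.2⟩⟩
instance : Sub (CoefSeq e) := ⟨fun A B => ⟨A.1 - B.1, (coefSub e).sub_mem A.2 B.2⟩⟩
instance : SMul ℕ (CoefSeq e) := ⟨fun n A => ⟨n • A.1, nsmul_mem A.2 n⟩⟩
instance : SMul ℤ (CoefSeq e) := ⟨fun n A => ⟨n • A.1, zsmul_mem A.2 n⟩⟩
instance : SMul ℝ (CoefSeq e) := ⟨fun c A => ⟨c • A.1, (coefSub e).smul_mem c A.2⟩⟩

@[simp] lemma zero_toFun : (0 : CoefSeq e).toFun = 0 := rfl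
@[simp] lemma add_toFun (A B : CoefSeq e) : (A + B).toFun = A.toFun + B.toFun := rfl
@[simp] lemma neg_toFun (A : CoefSeq e) : (-A).toFun = -A.toFun := rfl
@[simp] lemma sub_toFun (A B : CoefSeq e) : (A - B).toFun = A.toFun - B.toFun := rfl
@[simp] lemma smul_toFun (c : ℝ) (A : CoefSeq e) : (c • A).toFun = c • A.toFun := rfl

instance : AddCommGroup (CoefSeq e) :=
  toFun_injective.addCommGroup toFun rfl (fun _ _ => rfl) (fun _ => rfl) (fun _ _ => rfl)
    (fun _ _ => rfl) (fun _ _ => rfl)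

def toFunHom : CoefSeq e →+ (ℕ → ℝ) := AddMonoidHom.mk' toFun (fun _ _ => rfl)

instance : Module ℝ (CoefSeq e) :=
  toFun_injective.module ℝ toFunHom (fun _ _ => rfl)

lemma summable (A : CoefSeq e) : Summable (fun n => A.toFun n • e n) :=
  A.mem'.1.choose_spec.summable

end CoefSeq

noncomputable instance (e : ℕ → X) : NormedAddCommGroup (CoefSeq e) :=
  AddGroupNorm.toNormedAddCommGroup
  { toFun := fun A => ⨆ s : Finset ℕ, ‖∑ n ∈ s, A.toFun n • e n‖
    map_zero' := by
      have : ∀ s : Finset ℕ, ‖∑ n ∈ s, (0 : CoefSeq e).toFun n • e n‖ = 0 := by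
        intro s; simp
      simp only [this]; exact ciSup_const
    add_le' := by
      intro A B
      refine ciSup_le fun s => ?_
      have : ∑ n ∈ s, (A + B).toFun n • e n
          = ∑ n ∈ s, A.toFun n • e n + ∑ n ∈ s, B.toFun n • e n := by
        rw [← Finset.sum_add_distrib]
        exact Finset.sum_congr rfl fun n _ => by simp [add_smul]
      rw [this]
      exact (norm_add_le _ _).trans (add_le_add
        (le_ciSup (bddAbove_psum A.summable.hasSum) s)
        (le_ciSup (bddAbove_psum B.summable.hasSum) s))
    neg' := by
      intro A
      refine iSup_congr fun s => ?_
      have : ∑ n ∈ s, (-A).toFun n • e n = -(∑ n ∈ s, A.toFun n • e n) := by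
        rw [← Finset.sum_neg_distrib]
        exact Finset.sum_congr rfl fun n _ => by simp [neg_smul]
      rw [this, norm_neg]
    eq_zero_of_map_eq_zero' := by
      intro A h
      replace h : (⨆ s : Finset ℕ, ‖∑ m ∈ s, A.toFun m • e m‖) = 0 := h
      apply CoefSeq.toFun_injective
      funext n
      show A.toFun n = (0 : ℕ → ℝ) n
      rw [Pi.zero_apply]
      by_cases hen : e n = 0
      · exact A.mem'.2 n hen
      · have h1 : ‖∑ m ∈ ({n} : Finset ℕ), A.toFun m • e m‖
            ≤ ⨆ s : Finset ℕ, ‖∑ m ∈ s, A.toFun m • e m‖ :=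
          le_ciSup (bddAbove_psum A.summable.hasSum) _
        rw [h] at h1
        simp only [Finset.sum_singleton] at h1
        have h2 : A.toFun n • e n = 0 := norm_le_zero_iff.mp h1
        rcases smul_eq_zero.mp h2 with h3 | h3
        · exact h3
        · exact absurd h3 hen }

lemma coefSeq_norm_def {e : ℕ → X} (A : CoefSeq e) :
    ‖A‖ = ⨆ s : Finset ℕ, ‖∑ n ∈ s, A.toFun n • e n‖ := rfl

lemma psum_le_norm {e : ℕ → X} (A : CoefSeq e) (s : Finset ℕ) :
    ‖∑ n ∈ s, A.toFun n • e n‖ ≤ ‖A‖ :=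
  le_ciSup (bddAbove_psum A.summable.hasSum) s

lemma norm_le_of_psum_le {e : ℕ → X} (A : CoefSeq e) {M : ℝ}
    (h : ∀ s : Finset ℕ, ‖∑ n ∈ s, A.toFun n • e n‖ ≤ M) : ‖A‖ ≤ M :=
  ciSup_le h

noncomputable instance (e : ℕ → X) : NormedSpace ℝ (CoefSeq e) where
  norm_smul_le c A := by
    refine norm_le_of_psum_le _ fun s => ?_
    have : ∑ n ∈ s, (c • A).toFun n • e n
        = c • ∑ n ∈ s, A.toFun n • e n := by
      rw [Finset.smul_sum]
      exact Finset.sum_congr rfl fun n _ => by simp [smul_smul]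
    rw [this, norm_smul]
    exact mul_le_mul_of_nonneg_left (psum_le_norm A s) (norm_nonneg c)

instance (e : ℕ → X) [CompleteSpace X] : CompleteSpace (CoefSeq e) := by
  apply Metric.complete_of_cauchySeq_tendsto
  intro u hu
  have hcoord : ∀ n, ∃ t : ℝ, Tendsto (fun k => (u k).toFun n) atTop (𝓝 t) := by
    intro n
    by_cases hen : e n = 0
    · refine ⟨0, ?_⟩
      have hz : (fun k => (u k).toFun n) = fun _ => (0 : ℝ) :=
        funext fun k => (u k).mem'.2 n hen
      rw [hz]; exact tendsto_const_nhds
    · have hepos : 0 < ‖e n‖ := norm_pos_iff.mpr hen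
      have hC : CauchySeq (fun k => (u k).toFun n) := by
        rw [Metric.cauchySeq_iff]
        intro ε hε
        obtain ⟨K, hK⟩ := Metric.cauchySeq_iff.mp hu (ε * ‖e n‖) (by positivity)
        refine ⟨K, fun k hk l hl => ?_⟩
        have h1 : ‖∑ m ∈ ({n} : Finset ℕ), (u k - u l).toFun m • e m‖
            ≤ ‖u k - u l‖ := psum_le_norm _ _
        simp only [Finset.sum_singleton, CoefSeq.sub_toFun, Pi.sub_apply] at h1
        rw [norm_smul] at h1
        have h3 : ‖u k - u l‖ < ε * ‖e n‖ := by
          have := hK k hk l hl; rwa [dist_eq_norm] at this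
        rw [Real.dist_eq]
        have h4 : |(u k).toFun n - (u l).toFun n| * ‖e n‖ < ε * ‖e n‖ := by
          calc |(u k).toFun n - (u l).toFun n| * ‖e n‖
              = ‖(u k).toFun n - (u l).toFun n‖ * ‖e n‖ := by rw [Real.norm_eq_abs]
            _ ≤ ‖u k - u l‖ := h1
            _ < ε * ‖e n‖ := h3
        exact lt_of_mul_lt_mul_right h4 (le_of_lt hepos)
      exact cauchySeq_tendsto_of_complete hC
  choose aa ha using hcoord
  have hmain : ∀ ε > (0:ℝ), ∃ K, ∀ k ≥ K, ∀ s : Finset ℕ,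
      ‖∑ n ∈ s, ((u k).toFun n - aa n) • e n‖ ≤ ε := by
    intro ε hε
    obtain ⟨K, hK⟩ := Metric.cauchySeq_iff.mp hu (ε/2) (by positivity)
    refine ⟨K, fun k hk s => ?_⟩
    have hl : ∀ l, l ≥ K → ‖∑ n ∈ s, ((u k).toFun n - (u l).toFun n) • e n‖ ≤ ε/2 := by
      intro l hl
      have h1 : ‖∑ n ∈ s, (u k - u l).toFun n • e n‖ ≤ ‖u k - u l‖ :=
        psum_le_norm _ _
      simp only [CoefSeq.sub_toFun, Pi.sub_apply] at h1
      have h3 : ‖u k - u l‖ < ε/2 := by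
        have := hK k hk l hl; rwa [dist_eq_norm] at this
      linarith
    have htend : Tendsto (fun l => ∑ n ∈ s, ((u k).toFun n - (u l).toFun n) • e n)
        atTop (𝓝 (∑ n ∈ s, ((u k).toFun n - aa n) • e n)) := by
      refine tendsto_finset_sum _ fun n _ => ?_
      exact (Tendsto.sub tendsto_const_nhds (ha n)).smul_const (e n)
    have := le_of_tendsto htend.norm ((eventually_ge_atTop K).mono fun l h => hl l h)
    linarith
  have hmem : aa ∈ coefSub e := by
    constructor
    · have hsummable : Summable (fun n => aa n • e n) := by
        rw [summable_iff_vanishing]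
        intro U hU
        obtain ⟨ε, hε, hball⟩ := Metric.mem_nhds_iff.mp hU
        obtain ⟨K, hK⟩ := hmain (ε/3) (by positivity)
        have hsK : Summable (fun n => (u K).toFun n • e n) := (u K).summable
        obtain ⟨s₀, hs₀⟩ := summable_iff_vanishing.mp hsK (Metric.ball 0 (ε/3))
          (Metric.ball_mem_nhds 0 (by positivity))
        refine ⟨s₀, fun t ht => ?_⟩
        apply hball
        rw [Metric.mem_ball, dist_zero_right]
        have h1 : ‖∑ n ∈ t, (aa n - (u K).toFun n) • e n‖ ≤ ε/3 := by
          have h := hK K le_rfl t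
          have heq : ∑ n ∈ t, (aa n - (u K).toFun n) • e n
              = -(∑ n ∈ t, ((u K).toFun n - aa n) • e n) := by
            rw [← Finset.sum_neg_distrib]
            exact Finset.sum_congr rfl fun n _ => by rw [← neg_smul, neg_sub]
          rw [heq, norm_neg]; exact h
        have h2 : ‖∑ n ∈ t, (u K).toFun n • e n‖ < ε/3 := by
          have := hs₀ t ht
          rwa [Metric.mem_ball, dist_zero_right] at this
        have heq2 : ∑ n ∈ t, aa n • e n
            = ∑ n ∈ t, (aa n - (u K).toFun n) • e n + ∑ n ∈ t, (u K).toFun n • e n := by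
          rw [← Finset.sum_add_distrib]
          refine Finset.sum_congr rfl fun n _ => ?_
          rw [← add_smul, sub_add_cancel]
        calc ‖∑ n ∈ t, aa n • e n‖
            ≤ ‖∑ n ∈ t, (aa n - (u K).toFun n) • e n‖ + ‖∑ n ∈ t, (u K).toFun n • e n‖ := by
              rw [heq2]; exact norm_add_le _ _
          _ < ε := by linarith
      exact ⟨_, hsummable.hasSum⟩
    · intro n hen
      have hz : (fun k => (u k).toFun n) = fun _ => (0 : ℝ) :=
        funext fun k => (u k).mem'.2 n hen
      have h0 : Tendsto (fun k => (u k).toFun n) atTop (𝓝 (0:ℝ)) := by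
        rw [hz]; exact tendsto_const_nhds
      exact tendsto_nhds_unique (ha n) h0
  refine ⟨⟨aa, hmem⟩, ?_⟩
  rw [Metric.tendsto_atTop]
  intro ε hε
  obtain ⟨K, hK⟩ := hmain (ε/2) (by positivity)
  refine ⟨K, fun k hk => ?_⟩
  have hle : dist (u k) ⟨aa, hmem⟩ ≤ ε/2 := by
    rw [dist_eq_norm]
    refine norm_le_of_psum_le _ fun s => ?_
    simp only [CoefSeq.sub_toFun, Pi.sub_apply]
    exact hK k hk s
  linarith

def CoefSeq.toFunLinear (e : ℕ → X) : CoefSeq e →ₗ[ℝ] (ℕ → ℝ) where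
  toFun := CoefSeq.toFun
  map_add' _ _ := rfl
  map_smul' _ _ := rfl

noncomputable def coefSum (e : ℕ → X) : CoefSeq e →ₗ[ℝ] X where
  toFun A := ∑' n, A.toFun n • e n
  map_add' A B := by
    have h : (fun n => (A + B).toFun n • e n)
        = fun n => A.toFun n • e n + B.toFun n • e n := by
      funext n; simp [add_smul]
    show ∑' n, (A + B).toFun n • e n = (∑' n, A.toFun n • e n) + ∑' n, B.toFun n • e n
    rw [h]
    exact Summable.tsum_add A.summable B.summable
  map_smul' c A := by
    have h : (fun n => (c • A).toFun n • e n) = fun n => c • (A.toFun n • e n) := by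
      funext n; simp [smul_smul]
    show ∑' n, (c • A).toFun n • e n = (RingHom.id ℝ) c • ∑' n, A.toFun n • e n
    rw [h]
    simp only [RingHom.id_apply]
    exact Summable.tsum_const_smul c A.summable

theorem exists_coef_bound (e : ℕ → X) [CompleteSpace X] (he : IsUncondBasis e) :
    ∃ (b : X →ₗ[ℝ] (ℕ → ℝ)) (K : ℝ), 0 < K ∧
      (∀ x, HasSum (fun n => b x n • e n) x) ∧
      (∀ x (s : Finset ℕ), ‖∑ n ∈ s, b x n • e n‖ ≤ K * ‖x‖) := by
  classical
  set S : CoefSeq e →ₗ[ℝ] X := coefSum e with hS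
  have hSA : ∀ A : CoefSeq e, HasSum (fun n => A.toFun n • e n) (S A) := by
    intro A
    exact A.summable.hasSum
  have hbound : ∀ A : CoefSeq e, ‖S A‖ ≤ 1 * ‖A‖ := by
    intro A
    rw [one_mul]
    exact le_of_tendsto (hSA A).norm (Filter.Eventually.of_forall fun s => psum_le_norm A s)
  have hinj : Function.Injective S := by
    intro A B h
    apply CoefSeq.toFun_injective
    obtain ⟨a, _, hauniq⟩ := he.2 (S A)
    have h1 : A.toFun = a := hauniq _ (hSA A)
    have h2 : B.toFun = a := hauniq _ (h ▸ hSA B)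
    rw [h1, h2]
  have hsurj : Function.Surjective S := by
    intro x
    obtain ⟨a, ha, -⟩ := he.2 x
    have hmem : a ∈ coefSub e := ⟨⟨x, ha⟩, fun n h => absurd h (he.1 n)⟩
    exact ⟨⟨a, hmem⟩, ha.tsum_eq⟩
  let Eq0 := LinearEquiv.ofBijective S ⟨hinj, hsurj⟩
  have hcont : Continuous Eq0 := (S.mkContinuous 1 hbound).continuous
  let EqL := Eq0.toContinuousLinearEquivOfContinuous hcont
  let R : X →L[ℝ] CoefSeq e := (EqL.symm : X ≃L[ℝ] CoefSeq e)
  refine ⟨(CoefSeq.toFunLinear e).comp (R : X →ₗ[ℝ] CoefSeq e), ‖R‖ + 1, ?_, ?_, ?_⟩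
  · positivity
  · intro x
    have h1 : HasSum (fun n => (R x).toFun n • e n) (S (R x)) := hSA (R x)
    have h2 : S (R x) = x := by
      have : EqL (EqL.symm x) = x := EqL.apply_symm_apply x
      exact this
    rw [h2] at h1
    exact h1
  · intro x s
    have h1 : ‖∑ n ∈ s, (R x).toFun n • e n‖ ≤ ‖R x‖ := psum_le_norm _ _
    have h2 : ‖R x‖ ≤ ‖R‖ * ‖x‖ := R.le_opNorm x
    have h3 : ‖R‖ * ‖x‖ ≤ (‖R‖ + 1) * ‖x‖ := by
      have := norm_nonneg x
      nlinarith
    exact h1.trans (h2.trans h3)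

noncomputable def recSeq {α : Type*} (g : (k : ℕ) → (Fin k → α) → α) : ℕ → α
  | k => g k fun i : Fin k => recSeq g i
  decreasing_by exact i.2

lemma recSeq_eq {α : Type*} (g : (k : ℕ) → (Fin k → α) → α) (k : ℕ) :
    recSeq g k = g k fun i : Fin k => recSeq g i := by
  rw [recSeq]

lemma exists_separated {X Y : Type*} [NormedAddCommGroup X] [NormedSpace ℝ X] [CompleteSpace X]
    [NormedAddCommGroup Y] [NormedSpace ℝ Y]
    (T : Y →L[ℝ] X) (hT : ¬ CompactOp T) :
    ∃ ε : ℝ, 0 < ε ∧ ∃ w : ℕ → Y, (∀ k, ‖w k‖ ≤ 1) ∧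
      ∀ k l : ℕ, k < l → ε ≤ ‖T (w l) - T (w k)‖ := by
  classical
  have htb : ¬ TotallyBounded (T '' Metric.closedBall 0 1) := by
    intro h
    exact hT (TotallyBounded.isCompact_of_isClosed h.closure isClosed_closure)
  rw [Metric.totallyBounded_iff] at htb
  push_neg at htb
  obtain ⟨ε, hε, hsep⟩ := htb
  refine ⟨ε, hε, ?_⟩
  have hstep : ∀ (k : ℕ) (prev : Fin k → Y), ∃ wk : Y, ‖wk‖ ≤ 1 ∧
      ∀ i : Fin k, ε ≤ ‖T wk - T (prev i)‖ := by
    intro k prev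
    have hns := hsep (Set.range fun i : Fin k => T (prev i)) (Set.finite_range _)
    rw [Set.not_subset] at hns
    obtain ⟨p, hp, hpn⟩ := hns
    obtain ⟨wk, hwk, rfl⟩ := hp
    refine ⟨wk, mem_closedBall_zero_iff.mp hwk, ?_⟩
    intro i
    have hnm : T wk ∉ Metric.ball (T (prev i)) ε := fun hmem =>
      hpn (Set.mem_biUnion ⟨i, rfl⟩ hmem)
    rw [Metric.mem_ball, not_lt, dist_eq_norm] at hnm
    exact hnm
  choose g hg using hstep
  refine ⟨recSeq g, fun k => ?_, fun k l hkl => ?_⟩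
  · rw [recSeq_eq]; exact (hg k _).1
  · have h2 := (hg l (fun i : Fin l => recSeq g i)).2 ⟨k, hkl⟩
    rw [recSeq_eq g l]
    exact h2

lemma sum_fin_card {M : Type*} [AddCommMonoid M] (s : Finset ℕ) (g : ℕ → M) :
    ∑ i : Fin s.card, g ((s.equivFin.symm i : ℕ)) = ∑ j ∈ s, g j := by
  rw [← Finset.sum_coe_sort s g]
  exact Fintype.sum_equiv s.equivFin.symm _ _ fun i => rfl

lemma injective_equivFin_val (s : Finset ℕ) :
    Function.Injective (fun i : Fin s.card => ((s.equivFin.symm i : {x // x ∈ s}) : ℕ)) := by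
  intro i j h
  exact s.equivFin.symm.injective (Subtype.ext h)

lemma containsLp_of_estimates {Z : Type*} [NormedAddCommGroup Z] [NormedSpace ℝ Z]
    [CompleteSpace Z] {q : ℝ} (hq : 1 ≤ q) (u : ℕ → Z) {c C : ℝ} (hc : 0 < c)
    (hlow : ∀ (a : ℕ → ℝ) (s : Finset ℕ),
      c * (∑ j ∈ s, |a j| ^ q) ^ (1/q) ≤ ‖∑ j ∈ s, a j • u j‖)
    (hup : ∀ (a : ℕ → ℝ) (s : Finset ℕ),
      ‖∑ j ∈ s, a j • u j‖ ≤ C * (∑ j ∈ s, |a j| ^ q) ^ (1/q)) :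
    ContainsLp Z q := by
  classical
  have hq0 : 0 < q := lt_of_lt_of_le one_pos hq
  have hC : 0 < C := by
    have h1 := hlow (fun _ => 1) {0}
    have h2 := hup (fun _ => 1) {0}
    simp only [Finset.sum_singleton, abs_one, Real.one_rpow, one_smul, mul_one] at h1 h2
    linarith
  set p : ENNReal := ENNReal.ofReal q with hp
  have hpt : p.toReal = q := ENNReal.toReal_ofReal (le_of_lt hq0)
  have hpt0 : 0 < p.toReal := by rw [hpt]; exact hq0
  have hfs : ∀ f : lp (fun _ : ℕ => ℝ) p, Summable (fun j => |f j| ^ q) := by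
    intro f
    have hm := lp.memℓp f
    rw [memℓp_gen_iff hpt0] at hm
    simpa [hpt, Real.norm_eq_abs] using hm
  have hnorm : ∀ f : lp (fun _ : ℕ => ℝ) p, ‖f‖ = (∑' j, |f j| ^ q) ^ (1/q) := by
    intro f
    rw [lp.norm_eq_tsum_rpow hpt0 f]
    simp [hpt, Real.norm_eq_abs]
  have hsummable : ∀ f : lp (fun _ : ℕ => ℝ) p, Summable (fun j => f j • u j) := by
    intro f
    rw [summable_iff_vanishing]
    intro U hU
    obtain ⟨ε, hε, hball⟩ := Metric.mem_nhds_iff.mp hU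
    set δ : ℝ := (ε / (2 * C)) ^ q with hδ
    have hδpos : 0 < δ := by positivity
    obtain ⟨s₀, hs₀⟩ := summable_iff_vanishing.mp (hfs f) (Metric.ball 0 δ)
      (Metric.ball_mem_nhds 0 hδpos)
    refine ⟨s₀, fun t ht => ?_⟩
    apply hball
    rw [Metric.mem_ball, dist_zero_right]
    have h1 : ∑ j ∈ t, |f j| ^ q < δ := by
      have h := hs₀ t ht
      rw [Metric.mem_ball, dist_zero_right] at h
      calc ∑ j ∈ t, |f j| ^ q ≤ |∑ j ∈ t, |f j| ^ q| := le_abs_self _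
        _ < δ := by simpa [Real.norm_eq_abs] using h
    have h2 : (∑ j ∈ t, |f j| ^ q) ^ (1/q) < δ ^ (1/q) := by
      apply Real.rpow_lt_rpow (by positivity) h1 (by positivity)
    have h3 : δ ^ (1/q) = ε / (2 * C) := by
      rw [hδ, ← Real.rpow_mul (by positivity), mul_one_div_cancel (ne_of_gt hq0),
        Real.rpow_one]
    calc ‖∑ j ∈ t, f j • u j‖ ≤ C * (∑ j ∈ t, |f j| ^ q) ^ (1/q) := hup _ t
      _ < C * (ε / (2 * C)) := by
          apply mul_lt_mul_of_pos_left _ hC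
          rw [← h3]; exact h2
      _ = ε / 2 := by field_simp
      _ < ε := by linarith
  set J : lp (fun _ : ℕ => ℝ) p →ₗ[ℝ] Z :=
    { toFun := fun f => ∑' j, f j • u j
      map_add' := by
        intro f g
        show ∑' j, (f + g) j • u j = (∑' j, f j • u j) + ∑' j, g j • u j
        have heq : (fun j => (f + g) j • u j) = fun j => f j • u j + g j • u j := by
          funext j
          rw [lp.coeFn_add, Pi.add_apply, add_smul]
        rw [heq]
        exact Summable.tsum_add (hsummable f) (hsummable g)
      map_smul' := by
        intro r f
        show ∑' j, (r • f) j • u j = r • ∑' j, f j • u j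
        have heq : (fun j => (r • f) j • u j) = fun j => r • (f j • u j) := by
          funext j
          rw [lp.coeFn_smul, Pi.smul_apply, smul_smul, smul_eq_mul]
        rw [heq]
        exact Summable.tsum_const_smul r (hsummable f) } with hJ
  refine ⟨J, C, c, hc, fun f => ⟨?_, ?_⟩⟩
  · have hhs : HasSum (fun j => f j • u j) (J f) := (hsummable f).hasSum
    have hbd : ∀ s : Finset ℕ, ‖∑ j ∈ s, f j • u j‖ ≤ C * ‖f‖ := by
      intro s
      have h1 : ∑ j ∈ s, |f j| ^ q ≤ ∑' j, |f j| ^ q :=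
        Summable.sum_le_tsum s (fun j _ => by positivity) (hfs f)
      have h2 : (∑ j ∈ s, |f j| ^ q) ^ (1/q) ≤ (∑' j, |f j| ^ q) ^ (1/q) :=
        Real.rpow_le_rpow (by positivity) h1 (by positivity)
      calc ‖∑ j ∈ s, f j • u j‖ ≤ C * (∑ j ∈ s, |f j| ^ q) ^ (1/q) := hup _ s
        _ ≤ C * (∑' j, |f j| ^ q) ^ (1/q) := by
            exact mul_le_mul_of_nonneg_left h2 (le_of_lt hC)
        _ = C * ‖f‖ := by rw [hnorm f]
    exact le_of_tendsto hhs.norm (Filter.Eventually.of_forall hbd)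
  · have hhs : HasSum (fun j => f j • u j) (J f) := (hsummable f).hasSum
    have ht1 : Filter.Tendsto (fun s : Finset ℕ => ∑ j ∈ s, |f j| ^ q) Filter.atTop
        (𝓝 (∑' j, |f j| ^ q)) := (hfs f).hasSum
    have ht2 : Filter.Tendsto (fun s : Finset ℕ => c * (∑ j ∈ s, |f j| ^ q) ^ (1/q))
        Filter.atTop (𝓝 (c * (∑' j, |f j| ^ q) ^ (1/q))) :=
      (ht1.rpow_const (Or.inr (by positivity))).const_mul c
    have hle := le_of_tendsto_of_tendsto' ht2 hhs.norm (fun s => hlow _ s)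
    rw [hnorm f]
    exact hle

lemma rpow_sum_factor {q : ℝ} (hq0 : 0 < q) (s : Finset ℕ) (a : ℕ → ℝ) (c : ℝ) (hc : 0 ≤ c) :
    (∑ j ∈ s, (c * |a j|) ^ q) ^ (1/q) = c * (∑ j ∈ s, |a j| ^ q) ^ (1/q) := by
  have h1 : ∀ j ∈ s, (c * |a j|) ^ q = c ^ q * |a j| ^ q :=
    fun j _ => Real.mul_rpow hc (abs_nonneg _)
  rw [Finset.sum_congr rfl h1, ← Finset.mul_sum,
    Real.mul_rpow (by positivity) (by positivity), ← Real.rpow_mul hc,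
    mul_one_div_cancel (ne_of_gt hq0), Real.rpow_one]

lemma rpow_sum_le_of_le {q : ℝ} (hq0 : 0 < q) (s : Finset ℕ) (t a : ℕ → ℝ) (c : ℝ)
    (hc : 0 ≤ c) (ht : ∀ j ∈ s, 0 ≤ t j) (h : ∀ j ∈ s, t j ≤ c * |a j|) :
    (∑ j ∈ s, t j ^ q) ^ (1/q) ≤ c * (∑ j ∈ s, |a j| ^ q) ^ (1/q) := by
  rw [← rpow_sum_factor hq0 s a c hc]
  refine Real.rpow_le_rpow (Finset.sum_nonneg fun j hj => Real.rpow_nonneg (ht j hj) q) ?_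
    (by positivity)
  exact Finset.sum_le_sum fun j hj => Real.rpow_le_rpow (ht j hj) (h j hj) (le_of_lt hq0)

lemma le_rpow_sum_of_le {q : ℝ} (hq0 : 0 < q) (s : Finset ℕ) (t a : ℕ → ℝ) (c : ℝ)
    (hc : 0 ≤ c) (h : ∀ j ∈ s, c * |a j| ≤ t j) :
    c * (∑ j ∈ s, |a j| ^ q) ^ (1/q) ≤ (∑ j ∈ s, t j ^ q) ^ (1/q) := by
  rw [← rpow_sum_factor hq0 s a c hc]
  refine Real.rpow_le_rpow (by positivity) ?_ (by positivity)
  exact Finset.sum_le_sum fun j hj =>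
    Real.rpow_le_rpow (mul_nonneg hc (abs_nonneg _)) (h j hj) (le_of_lt hq0)

lemma abs_le_rpow_sum {q : ℝ} (hq0 : 0 < q) (s : Finset ℕ) (a : ℕ → ℝ) {j : ℕ}
    (hj : j ∈ s) : |a j| ≤ (∑ i ∈ s, |a i| ^ q) ^ (1/q) := by
  have h1 : |a j| ^ q ≤ ∑ i ∈ s, |a i| ^ q :=
    Finset.single_le_sum (f := fun i => |a i| ^ q) (fun i _ => by positivity) hj
  have h2 : (|a j| ^ q) ^ (1/q) ≤ (∑ i ∈ s, |a i| ^ q) ^ (1/q) :=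
    Real.rpow_le_rpow (by positivity) h1 (by positivity)
  rwa [← Real.rpow_mul (abs_nonneg _), mul_one_div_cancel (ne_of_gt hq0),
    Real.rpow_one] at h2

end S8

set_option maxHeartbeats 1000000 in
open S8 in
theorem statement8 {X Y : Type*} [NormedAddCommGroup X] [NormedSpace ℝ X] [CompleteSpace X]
    [NormedAddCommGroup Y] [NormedSpace ℝ Y] [CompleteSpace Y]
    (q : ℝ) (hq : 1 ≤ q)
    (e : ℕ → X) (he : IsUncondBasis e) (hlow : LowerEstimate e q)
    (y : ℕ → Y) (hy : IsUncondBasis y) (hup : UpperEstimate y q)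
    (hcopy : ¬ ContainsLp X q ∨ ¬ ContainsLp Y q) :
    ∀ T : Y →L[ℝ] X, CompactOp T := by
  classical
  intro T
  by_contra hT
  have hq0 : (0:ℝ) < q := lt_of_lt_of_le one_pos hq
  obtain ⟨CX, hCX, hlowE⟩ := hlow
  obtain ⟨CY, hCY, hupE⟩ := hup
  obtain ⟨bX, KX, hKX, hbXsum, hbXbound⟩ := S8.exists_coef_bound e he
  obtain ⟨bY, KY, hKY, hbYsum, hbYbound⟩ := S8.exists_coef_bound y hy
  obtain ⟨ε, hε, w, hw1, hwsep⟩ := S8.exists_separated T hT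
  have hyn : ∀ n, (0:ℝ) < ‖y n‖ := fun n => norm_pos_iff.mpr (hy.1 n)
  have hen : ∀ n, (0:ℝ) < ‖e n‖ := fun n => norm_pos_iff.mpr (he.1 n)
  have hT2 : 0 < ‖T‖ := by
    have h1 := hwsep 0 1 one_pos
    have h2 : T (w 1) - T (w 0) = T (w 1 - w 0) := (map_sub T _ _).symm
    rw [h2] at h1
    have h3 : ‖T (w 1 - w 0)‖ ≤ ‖T‖ * ‖w 1 - w 0‖ := T.le_opNorm _
    have h4 : ‖w 1 - w 0‖ ≤ 2 := (norm_sub_le _ _).trans (by linarith [hw1 0, hw1 1])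
    nlinarith [norm_nonneg (w 1 - w 0), norm_nonneg T]
  -- coordinate bounds
  have hcbY : ∀ (x : Y) (n : ℕ), |bY x n| * ‖y n‖ ≤ KY * ‖x‖ := by
    intro x n
    have h := hbYbound x {n}
    simpa [norm_smul] using h
  have hcbX : ∀ (x : X) (n : ℕ), |bX x n| * ‖e n‖ ≤ KX * ‖x‖ := by
    intro x n
    have h := hbXbound x {n}
    simpa [norm_smul] using h
  -- diagonalization
  set cY : ℕ → ℝ := fun n => KY / ‖y n‖ with hcY
  set cX : ℕ → ℝ := fun n => KX * ‖T‖ / ‖e n‖ with hcX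
  set P : ℕ → (ℕ → ℝ) × (ℕ → ℝ) := fun k => (bY (w k), bX (T (w k))) with hPdef
  have hPmem : ∀ k, P k ∈ (Set.univ.pi fun n => Set.Icc (-cY n) (cY n)) ×ˢ
      (Set.univ.pi fun n => Set.Icc (-cX n) (cX n)) := by
    intro k
    constructor
    · intro n _
      have h1 : |bY (w k) n| * ‖y n‖ ≤ KY * 1 := by
        refine (hcbY (w k) n).trans ?_
        exact mul_le_mul_of_nonneg_left (hw1 k) (le_of_lt hKY)
      have h2 : |bY (w k) n| ≤ cY n := by
        rw [hcY]
        rw [le_div_iff₀ (hyn n)]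
        linarith
      exact abs_le.mp h2
    · intro n _
      have h0 : ‖T (w k)‖ ≤ ‖T‖ := by
        have := T.le_opNorm (w k)
        nlinarith [hw1 k, norm_nonneg T]
      have h1 : |bX (T (w k)) n| * ‖e n‖ ≤ KX * ‖T‖ := by
        refine (hcbX (T (w k)) n).trans ?_
        exact mul_le_mul_of_nonneg_left h0 (le_of_lt hKX)
      have h2 : |bX (T (w k)) n| ≤ cX n := by
        rw [hcX, le_div_iff₀ (hen n)]
        linarith
      exact abs_le.mp h2
  have hcomp : IsCompact ((Set.univ.pi fun n => Set.Icc (-cY n) (cY n)) ×ˢ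
      (Set.univ.pi fun n => Set.Icc (-cX n) (cX n))) :=
    (isCompact_univ_pi fun n => isCompact_Icc).prod (isCompact_univ_pi fun n => isCompact_Icc)
  obtain ⟨L, _, φ, hφ, hφt⟩ := hcomp.tendsto_subseq hPmem
  have hYlim : ∀ n, Filter.Tendsto (fun k => bY (w (φ k)) n) Filter.atTop (𝓝 (L.1 n)) := by
    intro n
    have h1 : Filter.Tendsto (fun k => (P (φ k)).1) Filter.atTop (𝓝 L.1) :=
      ((continuous_fst.tendsto L).comp hφt)
    exact ((continuous_apply n).tendsto L.1).comp h1
  have hXlim : ∀ n, Filter.Tendsto (fun k => bX (T (w (φ k))) n) Filter.atTop (𝓝 (L.2 n)) := by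
    intro n
    have h1 : Filter.Tendsto (fun k => (P (φ k)).2) Filter.atTop (𝓝 L.2) :=
      ((continuous_snd.tendsto L).comp hφt)
    exact ((continuous_apply n).tendsto L.2).comp h1
  -- difference sequence
  set v : ℕ → Y := fun k => w (φ (2*k+1)) - w (φ (2*k)) with hvdef
  have hvnorm : ∀ k, ‖v k‖ ≤ 2 := by
    intro k
    rw [hvdef]
    exact (norm_sub_le _ _).trans (by linarith [hw1 (φ (2*k+1)), hw1 (φ (2*k))])
  have hvsep : ∀ k, ε ≤ ‖T (v k)‖ := by
    intro k
    have h1 := hwsep (φ (2*k)) (φ (2*k+1)) (hφ (by omega))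
    rw [hvdef]
    show ε ≤ ‖T (w (φ (2*k+1)) - w (φ (2*k)))‖
    rw [map_sub]
    exact h1
  have h2k : Filter.Tendsto (fun k : ℕ => 2*k) Filter.atTop Filter.atTop :=
    Filter.tendsto_atTop_mono (fun k => by simp only [id_eq]; omega) Filter.tendsto_id
  have h2k1 : Filter.Tendsto (fun k : ℕ => 2*k+1) Filter.atTop Filter.atTop :=
    Filter.tendsto_atTop_mono (fun k => by simp only [id_eq]; omega) Filter.tendsto_id
  have hvY0 : ∀ n, Filter.Tendsto (fun k => bY (v k) n) Filter.atTop (𝓝 0) := by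
    intro n
    have heq : (fun k => bY (v k) n)
        = fun k => bY (w (φ (2*k+1))) n - bY (w (φ (2*k))) n := by
      funext k
      rw [hvdef]
      show bY (w (φ (2*k+1)) - w (φ (2*k))) n = _
      rw [map_sub]
      rfl
    rw [heq]
    have ha := ((hYlim n).comp h2k1).sub ((hYlim n).comp h2k)
    simpa [Function.comp] using ha
  have hvX0 : ∀ n, Filter.Tendsto (fun k => bX (T (v k)) n) Filter.atTop (𝓝 0) := by
    intro n
    have heq : (fun k => bX (T (v k)) n)
        = fun k => bX (T (w (φ (2*k+1)))) n - bX (T (w (φ (2*k)))) n := by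
      funext k
      rw [hvdef]
      show bX (T (w (φ (2*k+1)) - w (φ (2*k)))) n = _
      rw [map_sub, map_sub]
      rfl
    rw [heq]
    have ha := ((hXlim n).comp h2k1).sub ((hXlim n).comp h2k)
    simpa [Function.comp] using ha
  -- perturbation parameter
  set η : ℝ := min (min (1/2) (ε/4)) (ε/(16*CX*(‖T‖+1))) with hηdef
  have hη0 : 0 < η := by
    apply lt_min
    · apply lt_min
      · norm_num
      · linarith
    · positivity
  have hη1 : η ≤ 1/2 := (min_le_left _ _).trans (min_le_left _ _)
  have hη2 : η ≤ ε/4 := (min_le_left _ _).trans (min_le_right _ _)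
  have hη3 : η ≤ ε/(16*CX*(‖T‖+1)) := min_le_right _ _
  -- recursive construction of blocks
  have hstepex : ∀ st : ℕ × ℕ × ℕ × ℕ, ∃ next : ℕ × ℕ × ℕ × ℕ,
      next.1 = st.1 + 1 ∧ st.2.2.1 < next.2.2.1 ∧ st.2.2.2 < next.2.2.2 ∧
      (∑ n ∈ Finset.range st.2.2.1, |bY (v next.2.1) n| * ‖y n‖) ≤ η * (1/2)^(st.1+1) ∧
      (∑ n ∈ Finset.range st.2.2.2, |bX (T (v next.2.1)) n| * ‖e n‖) ≤ η * (1/2)^(st.1+1) ∧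
      ‖v next.2.1 - ∑ n ∈ Finset.range next.2.2.1, bY (v next.2.1) n • y n‖
        ≤ η * (1/2)^(st.1+1) ∧
      ‖T (v next.2.1) - ∑ n ∈ Finset.range next.2.2.2, bX (T (v next.2.1)) n • e n‖
        ≤ η * (1/2)^(st.1+1) := by
    rintro ⟨j, k, N, M⟩
    have hε' : (0:ℝ) < η * (1/2)^(j+1) := by positivity
    -- pick k'
    have hh1 : Filter.Tendsto (fun k' => ∑ n ∈ Finset.range N, |bY (v k') n| * ‖y n‖)
        Filter.atTop (𝓝 0) := by
      have h := tendsto_finset_sum (Finset.range N)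
        (fun n _ => ((hvY0 n).abs.mul_const ‖y n‖))
      simpa using h
    have hh2 : Filter.Tendsto (fun k' => ∑ n ∈ Finset.range M, |bX (T (v k')) n| * ‖e n‖)
        Filter.atTop (𝓝 0) := by
      have h := tendsto_finset_sum (Finset.range M)
        (fun n _ => ((hvX0 n).abs.mul_const ‖e n‖))
      simpa using h
    obtain ⟨k', hk'1, hk'2⟩ :=
      ((hh1.eventually (gt_mem_nhds hε')).and (hh2.eventually (gt_mem_nhds hε'))).exists
    -- pick N'
    have htailY : Filter.Tendsto
        (fun m => ‖v k' - ∑ n ∈ Finset.range m, bY (v k') n • y n‖) Filter.atTop (𝓝 0) := by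
      have h := (hbYsum (v k')).tendsto_sum_nat
      have h2 := (tendsto_const_nhds (x := v k') (f := Filter.atTop (α := ℕ))).sub h
      rw [sub_self] at h2
      simpa using h2.norm
    have htailX : Filter.Tendsto
        (fun m => ‖T (v k') - ∑ n ∈ Finset.range m, bX (T (v k')) n • e n‖)
        Filter.atTop (𝓝 0) := by
      have h := (hbXsum (T (v k'))).tendsto_sum_nat
      have h2 := (tendsto_const_nhds (x := T (v k')) (f := Filter.atTop (α := ℕ))).sub h
      rw [sub_self] at h2
      simpa using h2.norm
    obtain ⟨N', hN'1, hN'2⟩ :=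
      ((htailY.eventually (gt_mem_nhds hε')).and (Filter.eventually_gt_atTop N)).exists
    obtain ⟨M', hM'1, hM'2⟩ :=
      ((htailX.eventually (gt_mem_nhds hε')).and (Filter.eventually_gt_atTop M)).exists
    exact ⟨(j+1, k', N', M'), rfl, hN'2, hM'2, hk'1.le, hk'2.le, hN'1.le, hM'1.le⟩
  choose step hstep1 hstep2 hstep3 hstep4 hstep5 hstep6 hstep7 using hstepex
  set stf : ℕ → ℕ × ℕ × ℕ × ℕ := fun j => Nat.rec (0,0,0,0) (fun _ st => step st) j
    with hstfdef
  have hstfS : ∀ j, stf (j+1) = step (stf j) := fun j => rfl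
  have hstj : ∀ j, (stf j).1 = j := by
    intro j
    induction j with
    | zero => rfl
    | succ j ih => rw [hstfS, hstep1, ih]
  set kk : ℕ → ℕ := fun j => (stf (j+1)).2.1 with hkkdef
  set NN : ℕ → ℕ := fun j => (stf j).2.2.1 with hNNdef
  set MM : ℕ → ℕ := fun j => (stf j).2.2.2 with hMMdef
  have hNmono : ∀ j, NN j < NN (j+1) := by
    intro j
    have h := hstep2 (stf j)
    rwa [← hstfS] at h
  have hMmono : ∀ j, MM j < MM (j+1) := by
    intro j
    have h := hstep3 (stf j)
    rwa [← hstfS] at h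
  have hheadY : ∀ j, (∑ n ∈ Finset.range (NN j), |bY (v (kk j)) n| * ‖y n‖)
      ≤ η * (1/2)^(j+1) := by
    intro j
    have h := hstep4 (stf j)
    rwa [hstj j, ← hstfS] at h
  have hheadX : ∀ j, (∑ n ∈ Finset.range (MM j), |bX (T (v (kk j))) n| * ‖e n‖)
      ≤ η * (1/2)^(j+1) := by
    intro j
    have h := hstep5 (stf j)
    rwa [hstj j, ← hstfS] at h
  have htailY : ∀ j, ‖v (kk j) - ∑ n ∈ Finset.range (NN (j+1)), bY (v (kk j)) n • y n‖
      ≤ η * (1/2)^(j+1) := by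
    intro j
    have h := hstep6 (stf j)
    rwa [hstj j, ← hstfS] at h
  have htailX : ∀ j, ‖T (v (kk j)) - ∑ n ∈ Finset.range (MM (j+1)), bX (T (v (kk j))) n • e n‖
      ≤ η * (1/2)^(j+1) := by
    intro j
    have h := hstep7 (stf j)
    rwa [hstj j, ← hstfS] at h
  have hNle : Monotone NN := monotone_nat_of_le_succ (fun j => (hNmono j).le)
  have hMle : Monotone MM := monotone_nat_of_le_succ (fun j => (hMmono j).le)
  set uu : ℕ → Y := fun j => ∑ n ∈ Finset.Ico (NN j) (NN (j+1)), bY (v (kk j)) n • y n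
    with huudef
  set gg : ℕ → X := fun j => ∑ n ∈ Finset.Ico (MM j) (MM (j+1)), bX (T (v (kk j))) n • e n
    with hggdef
  have hIcoY : ∀ j, uu j = (∑ n ∈ Finset.range (NN (j+1)), bY (v (kk j)) n • y n)
      - ∑ n ∈ Finset.range (NN j), bY (v (kk j)) n • y n := by
    intro j
    rw [huudef]
    exact Finset.sum_Ico_eq_sub _ (hNle (Nat.le_succ j))
  have hIcoX : ∀ j, gg j = (∑ n ∈ Finset.range (MM (j+1)), bX (T (v (kk j))) n • e n)
      - ∑ n ∈ Finset.range (MM j), bX (T (v (kk j))) n • e n := by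
    intro j
    rw [hggdef]
    exact Finset.sum_Ico_eq_sub _ (hMle (Nat.le_succ j))
  have hheadYnorm : ∀ j, ‖∑ n ∈ Finset.range (NN j), bY (v (kk j)) n • y n‖
      ≤ η * (1/2)^(j+1) := by
    intro j
    calc ‖∑ n ∈ Finset.range (NN j), bY (v (kk j)) n • y n‖
        ≤ ∑ n ∈ Finset.range (NN j), ‖bY (v (kk j)) n • y n‖ := norm_sum_le _ _
      _ = ∑ n ∈ Finset.range (NN j), |bY (v (kk j)) n| * ‖y n‖ :=
          Finset.sum_congr rfl fun n _ => by rw [norm_smul, Real.norm_eq_abs]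
      _ ≤ η * (1/2)^(j+1) := hheadY j
  have hheadXnorm : ∀ j, ‖∑ n ∈ Finset.range (MM j), bX (T (v (kk j))) n • e n‖
      ≤ η * (1/2)^(j+1) := by
    intro j
    calc ‖∑ n ∈ Finset.range (MM j), bX (T (v (kk j))) n • e n‖
        ≤ ∑ n ∈ Finset.range (MM j), ‖bX (T (v (kk j))) n • e n‖ := norm_sum_le _ _
      _ = ∑ n ∈ Finset.range (MM j), |bX (T (v (kk j))) n| * ‖e n‖ :=
          Finset.sum_congr rfl fun n _ => by rw [norm_smul, Real.norm_eq_abs]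
      _ ≤ η * (1/2)^(j+1) := hheadX j
  have huv : ∀ j, ‖v (kk j) - uu j‖ ≤ 2 * (η * (1/2)^(j+1)) := by
    intro j
    have heq : v (kk j) - uu j
        = (v (kk j) - ∑ n ∈ Finset.range (NN (j+1)), bY (v (kk j)) n • y n)
          + ∑ n ∈ Finset.range (NN j), bY (v (kk j)) n • y n := by
      rw [hIcoY j]; abel
    rw [heq]
    refine (norm_add_le _ _).trans ?_
    have := htailY j
    have := hheadYnorm j
    linarith
  have hgv : ∀ j, ‖T (v (kk j)) - gg j‖ ≤ 2 * (η * (1/2)^(j+1)) := by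
    intro j
    have heq : T (v (kk j)) - gg j
        = (T (v (kk j)) - ∑ n ∈ Finset.range (MM (j+1)), bX (T (v (kk j))) n • e n)
          + ∑ n ∈ Finset.range (MM j), bX (T (v (kk j))) n • e n := by
      rw [hIcoX j]; abel
    rw [heq]
    refine (norm_add_le _ _).trans ?_
    have := htailX j
    have := hheadXnorm j
    linarith
  have hpow : ∀ j : ℕ, ((1:ℝ)/2)^(j+1) ≤ 1/2 := by
    intro j
    calc ((1:ℝ)/2)^(j+1) ≤ ((1:ℝ)/2)^1 :=
          pow_le_pow_of_le_one (by norm_num) (by norm_num) (by omega)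
      _ = 1/2 := pow_one _
  have hηj : ∀ j : ℕ, 2 * (η * (1/2)^(j+1)) ≤ η := by
    intro j
    have h := hpow j
    nlinarith [hη0.le]
  have hunorm : ∀ j, ‖uu j‖ ≤ 3 := by
    intro j
    have h1 : ‖uu j‖ ≤ ‖v (kk j)‖ + ‖v (kk j) - uu j‖ := by
      have h0 := norm_sub_le (v (kk j)) (v (kk j) - uu j)
      rw [sub_sub_cancel] at h0
      exact h0
    have h2 := huv j
    have h3 := hηj j
    have h4 := hvnorm (kk j)
    linarith
  have hglow : ∀ j, ε/2 ≤ ‖gg j‖ := by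
    intro j
    have h1 : ‖T (v (kk j))‖ - ‖gg j‖ ≤ ‖T (v (kk j)) - gg j‖ := norm_sub_norm_le _ _
    have h2 := hgv j
    have h3 := hηj j
    have h4 := hvsep (kk j)
    linarith
  have hTug : ∀ j, ‖T (uu j) - gg j‖ ≤ 2 * (η * (1/2)^(j+1)) * (‖T‖+1) := by
    intro j
    have heq : T (uu j) - gg j = T (uu j - v (kk j)) + (T (v (kk j)) - gg j) := by
      rw [map_sub]; abel
    rw [heq]
    refine (norm_add_le _ _).trans ?_
    have h1 : ‖T (uu j - v (kk j))‖ ≤ ‖T‖ * (2 * (η * (1/2)^(j+1))) := by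
      refine (T.le_opNorm _).trans ?_
      have h2 : ‖uu j - v (kk j)‖ ≤ 2 * (η * (1/2)^(j+1)) := by
        rw [norm_sub_rev]; exact huv j
      exact mul_le_mul_of_nonneg_left h2 (norm_nonneg _)
    have h3 := hgv j
    nlinarith [norm_nonneg T, hη0.le, pow_pos (by norm_num : (0:ℝ) < 1/2) (j+1)]
  -- disjoint supports
  have hdisjY : ∀ i j, i ≠ j →
      Disjoint (Finset.Ico (NN i) (NN (i+1))) (Finset.Ico (NN j) (NN (j+1))) := by
    have key : ∀ i j, i < j →
        Disjoint (Finset.Ico (NN i) (NN (i+1))) (Finset.Ico (NN j) (NN (j+1))) := by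
      intro i j hij
      refine Finset.disjoint_left.mpr fun x hx1 hx2 => ?_
      have h1 := Finset.mem_Ico.mp hx1
      have h2 := Finset.mem_Ico.mp hx2
      have h3 : NN (i+1) ≤ NN j := hNle (Nat.succ_le_of_lt hij)
      omega
    intro i j hij
    rcases lt_or_gt_of_ne hij with h | h
    · exact key i j h
    · exact (key j i h).symm
  have hdisjX : ∀ i j, i ≠ j →
      Disjoint (Finset.Ico (MM i) (MM (i+1))) (Finset.Ico (MM j) (MM (j+1))) := by
    have key : ∀ i j, i < j →
        Disjoint (Finset.Ico (MM i) (MM (i+1))) (Finset.Ico (MM j) (MM (j+1))) := by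
      intro i j hij
      refine Finset.disjoint_left.mpr fun x hx1 hx2 => ?_
      have h1 := Finset.mem_Ico.mp hx1
      have h2 := Finset.mem_Ico.mp hx2
      have h3 : MM (i+1) ≤ MM j := hMle (Nat.succ_le_of_lt hij)
      omega
    intro i j hij
    rcases lt_or_gt_of_ne hij with h | h
    · exact key i j h
    · exact (key j i h).symm
  -- membership in spans
  have hmemY : ∀ (r : ℝ) (j : ℕ),
      r • uu j ∈ Submodule.span ℝ (y '' ((Finset.Ico (NN j) (NN (j+1))) : Set ℕ)) := by
    intro r j
    refine Submodule.smul_mem _ _ ?_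
    rw [huudef]
    refine Submodule.sum_mem _ fun n hn => Submodule.smul_mem _ _ ?_
    exact Submodule.subset_span ⟨n, Finset.mem_coe.mpr hn, rfl⟩
  have hmemX : ∀ (r : ℝ) (j : ℕ),
      r • gg j ∈ Submodule.span ℝ (e '' ((Finset.Ico (MM j) (MM (j+1))) : Set ℕ)) := by
    intro r j
    refine Submodule.smul_mem _ _ ?_
    rw [hggdef]
    refine Submodule.sum_mem _ fun n hn => Submodule.smul_mem _ _ ?_
    exact Submodule.subset_span ⟨n, Finset.mem_coe.mpr hn, rfl⟩
  -- finset-indexed versions of the estimates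
  have hupFin : ∀ (a : ℕ → ℝ) (s : Finset ℕ),
      ‖∑ j ∈ s, a j • uu j‖ ≤ CY * (∑ j ∈ s, ‖a j • uu j‖ ^ q) ^ (1/q) := by
    intro a s
    have h := hupE s.card
      (fun i => (fun j => a j • uu j) ((s.equivFin.symm i : ℕ)))
      (fun i => Finset.Ico (NN ((s.equivFin.symm i : ℕ))) (NN ((s.equivFin.symm i : ℕ)+1)))
      (fun i1 i2 h12 => hdisjY _ _ (fun hcc => h12 (S8.injective_equivFin_val s hcc)))
      (fun i => hmemY _ _)
    have heq1 := S8.sum_fin_card s (fun j => a j • uu j)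
    have heq2 := S8.sum_fin_card s (fun j => ‖a j • uu j‖ ^ q)
    rw [← heq1, ← heq2]
    exact h
  have hlowFin : ∀ (a : ℕ → ℝ) (s : Finset ℕ),
      (∑ j ∈ s, ‖a j • gg j‖ ^ q) ^ (1/q) ≤ CX * ‖∑ j ∈ s, a j • gg j‖ := by
    intro a s
    have h := hlowE s.card
      (fun i => (fun j => a j • gg j) ((s.equivFin.symm i : ℕ)))
      (fun i => Finset.Ico (MM ((s.equivFin.symm i : ℕ))) (MM ((s.equivFin.symm i : ℕ)+1)))
      (fun i1 i2 h12 => hdisjX _ _ (fun hcc => h12 (S8.injective_equivFin_val s hcc)))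
      (fun i => hmemX _ _)
    have heq1 := S8.sum_fin_card s (fun j => a j • gg j)
    have heq2 := S8.sum_fin_card s (fun j => ‖a j • gg j‖ ^ q)
    rw [← heq1, ← heq2]
    exact h
  -- the two-sided claims
  have claimU : ∀ (a : ℕ → ℝ) (s : Finset ℕ),
      ‖∑ j ∈ s, a j • uu j‖ ≤ (CY * 3) * (∑ j ∈ s, |a j| ^ q) ^ (1/q) := by
    intro a s
    have h2 : (∑ j ∈ s, ‖a j • uu j‖ ^ q) ^ (1/q)
        ≤ 3 * (∑ j ∈ s, |a j| ^ q) ^ (1/q) := by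
      refine S8.rpow_sum_le_of_le hq0 s _ a 3 (by norm_num)
        (fun j _ => norm_nonneg _) ?_
      intro j _
      rw [norm_smul, Real.norm_eq_abs]
      calc |a j| * ‖uu j‖ ≤ |a j| * 3 :=
            mul_le_mul_of_nonneg_left (hunorm j) (abs_nonneg _)
        _ = 3 * |a j| := mul_comm _ _
    calc ‖∑ j ∈ s, a j • uu j‖ ≤ CY * ((∑ j ∈ s, ‖a j • uu j‖ ^ q) ^ (1/q)) := hupFin a s
      _ ≤ CY * (3 * (∑ j ∈ s, |a j| ^ q) ^ (1/q)) :=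
          mul_le_mul_of_nonneg_left h2 (le_of_lt hCY)
      _ = (CY * 3) * (∑ j ∈ s, |a j| ^ q) ^ (1/q) := by ring
  have claimL : ∀ (a : ℕ → ℝ) (s : Finset ℕ),
      (ε/(4*CX)) * (∑ j ∈ s, |a j| ^ q) ^ (1/q) ≤ ‖∑ j ∈ s, a j • (T (uu j))‖ := by
    intro a s
    have hρ0 : (0:ℝ) ≤ (∑ j ∈ s, |a j| ^ q) ^ (1/q) := by positivity
    have h1 := hlowFin a s
    have h2 : (ε/2) * (∑ j ∈ s, |a j| ^ q) ^ (1/q)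
        ≤ (∑ j ∈ s, ‖a j • gg j‖ ^ q) ^ (1/q) := by
      refine S8.le_rpow_sum_of_le hq0 s _ a (ε/2) (by linarith) ?_
      intro j _
      rw [norm_smul, Real.norm_eq_abs]
      calc (ε/2) * |a j| = |a j| * (ε/2) := mul_comm _ _
        _ ≤ |a j| * ‖gg j‖ := mul_le_mul_of_nonneg_left (hglow j) (abs_nonneg _)
    have h3 : ‖∑ j ∈ s, a j • gg j‖
        ≤ ‖∑ j ∈ s, a j • T (uu j)‖ + (ε/(4*CX)) * (∑ j ∈ s, |a j| ^ q) ^ (1/q) := by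
      have hsplit : ∑ j ∈ s, a j • gg j
          = ∑ j ∈ s, a j • T (uu j) + ∑ j ∈ s, a j • (gg j - T (uu j)) := by
        rw [← Finset.sum_add_distrib]
        refine Finset.sum_congr rfl fun j _ => ?_
        rw [← smul_add]
        congr 1
        abel
      have hterm : ∀ j ∈ s, ‖a j • (gg j - T (uu j))‖
          ≤ ((∑ i ∈ s, |a i| ^ q) ^ (1/q) * (2 * η * (‖T‖+1))) * (1/2)^(j+1) := by
        intro j hj
        rw [norm_smul, Real.norm_eq_abs]
        have ha := S8.abs_le_rpow_sum hq0 s a hj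
        have hd : ‖gg j - T (uu j)‖ ≤ 2 * (η * (1/2)^(j+1)) * (‖T‖+1) := by
          rw [norm_sub_rev]
          exact hTug j
        have hmul := mul_le_mul ha hd (norm_nonneg _) hρ0
        calc |a j| * ‖gg j - T (uu j)‖
            ≤ (∑ i ∈ s, |a i| ^ q) ^ (1/q) * (2 * (η * (1/2)^(j+1)) * (‖T‖+1)) := hmul
          _ = ((∑ i ∈ s, |a i| ^ q) ^ (1/q) * (2 * η * (‖T‖+1))) * (1/2)^(j+1) := by ring
      have hgeom : ∑ j ∈ s, ((1:ℝ)/2)^(j+1) ≤ 2 := by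
        have hg1 : ∀ j ∈ s, ((1:ℝ)/2)^(j+1) ≤ (1/2)^j := fun j _ =>
          pow_le_pow_of_le_one (by norm_num) (by norm_num) (by omega)
        refine (Finset.sum_le_sum hg1).trans ?_
        have hg2 : ∑ j ∈ s, ((1:ℝ)/2)^j ≤ ∑' j : ℕ, ((1:ℝ)/2)^j :=
          Summable.sum_le_tsum s (fun j _ => by positivity) summable_geometric_two
        rwa [tsum_geometric_two] at hg2
      have hsum2 : ‖∑ j ∈ s, a j • (gg j - T (uu j))‖
          ≤ (ε/(4*CX)) * (∑ j ∈ s, |a j| ^ q) ^ (1/q) := by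
        refine (norm_sum_le _ _).trans ?_
        refine (Finset.sum_le_sum hterm).trans ?_
        rw [← Finset.mul_sum]
        have hkey : η * (16*CX*(‖T‖+1)) ≤ ε := by
          have hpos : (0:ℝ) < 16*CX*(‖T‖+1) := by positivity
          exact (le_div_iff₀ hpos).mp hη3
        have hb : (0:ℝ) ≤ (∑ i ∈ s, |a i| ^ q) ^ (1/q) * (2 * η * (‖T‖+1)) := by
          have : (0:ℝ) ≤ 2 * η * (‖T‖+1) := by positivity
          exact mul_nonneg hρ0 this
        calc (∑ i ∈ s, |a i| ^ q) ^ (1/q) * (2 * η * (‖T‖+1)) * ∑ j ∈ s, ((1:ℝ)/2)^(j+1)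
            ≤ (∑ i ∈ s, |a i| ^ q) ^ (1/q) * (2 * η * (‖T‖+1)) * 2 :=
              mul_le_mul_of_nonneg_left hgeom hb
          _ ≤ (ε/(4*CX)) * (∑ j ∈ s, |a j| ^ q) ^ (1/q) := by
              rw [div_mul_eq_mul_div, le_div_iff₀ (by positivity : (0:ℝ) < 4*CX)]
              nlinarith [hρ0, hη0.le, norm_nonneg T, hCX.le]
      calc ‖∑ j ∈ s, a j • gg j‖
          ≤ ‖∑ j ∈ s, a j • T (uu j)‖ + ‖∑ j ∈ s, a j • (gg j - T (uu j))‖ := by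
            rw [hsplit]; exact norm_add_le _ _
        _ ≤ ‖∑ j ∈ s, a j • T (uu j)‖ + (ε/(4*CX)) * (∑ j ∈ s, |a j| ^ q) ^ (1/q) := by
            linarith [hsum2]
    have hfs : CX * (ε/(4*CX)) = ε/4 := by field_simp
    have h4 : CX * ‖∑ j ∈ s, a j • gg j‖
        ≤ CX * ‖∑ j ∈ s, a j • T (uu j)‖ + (ε/4) * (∑ j ∈ s, |a j| ^ q) ^ (1/q) := by
      have := mul_le_mul_of_nonneg_left h3 (le_of_lt hCX)
      rw [mul_add, ← mul_assoc, hfs] at this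
      exact this
    have h5 : (ε/4) * (∑ j ∈ s, |a j| ^ q) ^ (1/q) ≤ CX * ‖∑ j ∈ s, a j • T (uu j)‖ := by
      have h6 := h2.trans h1
      linarith
    rw [show ε/(4*CX) = (ε/4)/CX from (div_div ε 4 CX).symm,
      div_mul_eq_mul_div, div_le_iff₀ hCX]
    linarith [h5]
  have hTsum : ∀ (a : ℕ → ℝ) (s : Finset ℕ),
      T (∑ j ∈ s, a j • uu j) = ∑ j ∈ s, a j • T (uu j) := by
    intro a s
    rw [map_sum]
    exact Finset.sum_congr rfl fun j _ => map_smul T _ _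
  have claimLY : ∀ (a : ℕ → ℝ) (s : Finset ℕ),
      (ε/(4*CX*‖T‖)) * (∑ j ∈ s, |a j| ^ q) ^ (1/q) ≤ ‖∑ j ∈ s, a j • uu j‖ := by
    intro a s
    have h1 : ‖∑ j ∈ s, a j • T (uu j)‖ ≤ ‖T‖ * ‖∑ j ∈ s, a j • uu j‖ := by
      rw [← hTsum a s]
      exact T.le_opNorm _
    have h2 := (claimL a s).trans h1
    rw [show ε/(4*CX*‖T‖) = (ε/(4*CX))/‖T‖ from by rw [div_div],
      div_mul_eq_mul_div, div_le_iff₀ hT2]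
    calc ε/(4*CX) * (∑ j ∈ s, |a j| ^ q) ^ (1/q) ≤ ‖T‖ * ‖∑ j ∈ s, a j • uu j‖ := h2
      _ = ‖∑ j ∈ s, a j • uu j‖ * ‖T‖ := mul_comm _ _
  have claimUX : ∀ (a : ℕ → ℝ) (s : Finset ℕ),
      ‖∑ j ∈ s, a j • T (uu j)‖ ≤ (‖T‖ * (CY * 3)) * (∑ j ∈ s, |a j| ^ q) ^ (1/q) := by
    intro a s
    have h1 : ‖∑ j ∈ s, a j • T (uu j)‖ ≤ ‖T‖ * ‖∑ j ∈ s, a j • uu j‖ := by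
      rw [← hTsum a s]
      exact T.le_opNorm _
    calc ‖∑ j ∈ s, a j • T (uu j)‖ ≤ ‖T‖ * ‖∑ j ∈ s, a j • uu j‖ := h1
      _ ≤ ‖T‖ * ((CY * 3) * (∑ j ∈ s, |a j| ^ q) ^ (1/q)) :=
          mul_le_mul_of_nonneg_left (claimU a s) (norm_nonneg _)
      _ = (‖T‖ * (CY * 3)) * (∑ j ∈ s, |a j| ^ q) ^ (1/q) := by ring
  have hXcopy : ContainsLp X q :=
    S8.containsLp_of_estimates hq (fun j => T (uu j))
      (div_pos hε (by positivity)) claimL claimUX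
  have hYcopy : ContainsLp Y q :=
    S8.containsLp_of_estimates hq uu
      (div_pos hε (by positivity)) claimLY claimU
  rcases hcopy with h | h
  · exact h hXcopy
  · exact h hYcopy
end

section
/- Let 1 ≤ p < q < ∞. Let X be a real Banach space with an unconditional basis (e_n)_{n∈ℕ} satisfying a lower q-estimate and Y a real Banach space with an unconditional basis (y_n)_{n∈ℕ} satisfying an upper q-estimate. Then the product X × Y (with the sup norm) contains an isomorphic copy of ℓ_p if and only if X contains an isomorphic copy of ℓ_p. -/
open scoped BigOperators

section AuxStatement11
open Filter

lemma aux_disj_norm {p : ℝ} (hp : 0 < p) {ι : Type*} (s : Finset ι)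
    (w : ι → lp (fun _ : ℕ => ℝ) (ENNReal.ofReal p)) (D : ι → Finset ℕ)
    (hsupp : ∀ i ∈ s, ∀ n, n ∉ D i → w i n = 0)
    (hdisj : ∀ i ∈ s, ∀ j ∈ s, i ≠ j → Disjoint (D i) (D j)) :
    ‖∑ i ∈ s, w i‖ ^ p = ∑ i ∈ s, ‖w i‖ ^ p := by
  have htp : (ENNReal.ofReal p).toReal = p := ENNReal.toReal_ofReal hp.le
  have h0 : (0:ℝ) < (ENNReal.ofReal p).toReal := by rw [htp]; exact hp
  have key : ∀ n : ℕ, ‖(∑ i ∈ s, w i) n‖ ^ p = ∑ i ∈ s, ‖w i n‖ ^ p := by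
    intro n
    have hcoe : (∑ i ∈ s, w i) n = ∑ i ∈ s, w i n := by
      rw [lp.coeFn_sum]; simp
    rw [hcoe]
    by_cases h : ∃ i ∈ s, n ∈ D i
    · obtain ⟨i₀, hi₀s, hi₀⟩ := h
      have hz : ∀ j ∈ s, j ≠ i₀ → w j n = 0 := by
        intro j hjs hj
        exact hsupp j hjs n (Finset.disjoint_right.mp (hdisj j hjs i₀ hi₀s hj) hi₀)
      rw [Finset.sum_eq_single_of_mem i₀ hi₀s hz,
        Finset.sum_eq_single_of_mem i₀ hi₀s (fun j hjs hj => by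
          rw [hz j hjs hj, norm_zero, Real.zero_rpow hp.ne'])]
    · push_neg at h
      have hz : ∀ j ∈ s, w j n = 0 := fun j hjs => hsupp j hjs n (h j hjs)
      rw [Finset.sum_eq_zero hz, Finset.sum_eq_zero (fun j hjs => by
        rw [hz j hjs, norm_zero, Real.zero_rpow hp.ne'])]
      simp [Real.zero_rpow hp.ne']
  have h1 := lp.hasSum_norm h0 (∑ i ∈ s, w i)
  rw [htp] at h1
  have h2 : HasSum (fun n : ℕ => ∑ i ∈ s, ‖w i n‖ ^ p) (∑ i ∈ s, ‖w i‖ ^ p) := by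
    apply hasSum_sum
    intro i _
    have := lp.hasSum_norm h0 (w i)
    rwa [htp] at this
  exact (h1.congr_fun (fun n => (key n).symm)).unique h2

local notation "Ep" p => lp (fun _ : ℕ => ℝ) (ENNReal.ofReal p)

variable {Y : Type*} [NormedAddCommGroup Y] [NormedSpace ℝ Y] [CompleteSpace Y]

set_option maxHeartbeats 1000000 in
lemma aux_claim (p q : ℝ) [Fact (1 ≤ ENNReal.ofReal p)] (hp : 1 ≤ p) (hpq : p < q)
    (y : ℕ → Y) (hy : IsUncondBasis y) (hup : UpperEstimate y q)
    (B : (Ep p) →L[ℝ] Y) (N : ℕ) (ε : ℝ) (hε : 0 < ε) :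
    ∃ (M : ℕ) (f : Ep p),
      (∀ n, n ∉ Finset.Ico N M → f n = 0) ∧ ‖f‖ = 1 ∧ ‖B f‖ < ε := by
  have hp0 : (0:ℝ) < p := lt_of_lt_of_le one_pos hp
  have hq0 : (0:ℝ) < q := lt_trans hp0 hpq
  have htp : (ENNReal.ofReal p).toReal = p := ENNReal.toReal_ofReal hp0.le
  have h0 : (0:ℝ) < (ENNReal.ofReal p).toReal := by rw [htp]; exact hp0
  by_contra hcon
  push_neg at hcon
  -- hcon : ∀ M f, supp → norm1 → ε ≤ ‖B f‖
  -- coordinate functionals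
  choose coord hcoord using hy.2
  have hcoord1 : ∀ x, HasSum (fun n => coord x n • y n) x := fun x => (hcoord x).1
  have hcoord2 : ∀ (x : Y) (b : ℕ → ℝ), HasSum (fun n => b n • y n) x → b = coord x :=
    fun x => (hcoord x).2
  have coord_smul : ∀ (r : ℝ) (x : Y), coord (r • x) = fun n => r * coord x n := by
    intro r x
    refine (hcoord2 _ _ ?_).symm
    refine ((hcoord1 x).const_smul r).congr_fun fun n => ?_
    rw [smul_smul]
  have coord_add : ∀ x x' : Y, coord (x + x') = fun n => coord x n + coord x' n := by
    intro x x'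
    refine (hcoord2 _ _ ?_).symm
    refine ((hcoord1 x).add (hcoord1 x')).congr_fun fun n => ?_
    rw [add_smul]
  obtain ⟨CY, hCY0, hCY⟩ := hup
  -- choose m
  have hα : 0 < 1/p - 1/q := by
    have h1 : 1/q < 1/p := one_div_lt_one_div_of_lt hp0 hpq
    linarith
  obtain ⟨m, hm1, hm2⟩ : ∃ m : ℕ, 1 ≤ m ∧
      2 * (CY * (‖B‖ + 1)) / ε ≤ (m:ℝ) ^ (1/p - 1/q) := by
    have h1 : Tendsto (fun x : ℝ => x ^ (1/p - 1/q)) atTop atTop := tendsto_rpow_atTop hα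
    have h2 : Tendsto (fun m : ℕ => ((m:ℝ)) ^ (1/p - 1/q)) atTop atTop :=
      h1.comp tendsto_natCast_atTop_atTop
    have h3 := (h2.eventually_ge_atTop (2 * (CY * (‖B‖ + 1)) / ε)).and
      (Filter.eventually_ge_atTop 1)
    obtain ⟨m, hm⟩ := h3.exists
    exact ⟨m, hm.2, hm.1⟩
  have hm0 : (0:ℝ) < (m:ℝ) := by exact_mod_cast Nat.lt_of_lt_of_le Nat.zero_lt_one hm1
  set δ : ℝ := min 1 (ε * (m:ℝ)^(1/p) / (4 * m)) with hδdef
  have hmp_pos : (0:ℝ) < (m:ℝ)^(1/p) := Real.rpow_pos_of_pos hm0 _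
  have hδ0 : 0 < δ := lt_min one_pos (by positivity)
  have hδ1 : δ ≤ 1 := min_le_left _ _
  have hδ2 : (m:ℝ) * δ ≤ ε * (m:ℝ)^(1/p) / 4 := by
    have h1 : δ ≤ ε * (m:ℝ)^(1/p) / (4 * m) := min_le_right _ _
    calc (m:ℝ) * δ ≤ (m:ℝ) * (ε * (m:ℝ)^(1/p) / (4 * m)) :=
          mul_le_mul_of_nonneg_left h1 hm0.le
      _ = ε * (m:ℝ)^(1/p) / 4 := by field_simp
  -- the step construction
  have step : ∀ (l : ℕ) (G : Finset ℕ), ∃ (w : Ep p) (G' : Finset ℕ),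
      Disjoint G G' ∧ (∀ n, n ∉ Finset.Ico l (l + G.card + 1) → w n = 0) ∧ ‖w‖ = 1 ∧
      (∀ g ∈ G, coord (B w) g = 0) ∧
      ‖B w - ∑ g ∈ G', coord (B w) g • y g‖ ≤ δ := by
    intro l G
    classical
    obtain ⟨w', hw'supp, hw'ne, hw'ker⟩ : ∃ w' : Ep p,
        (∀ n, n ∉ Finset.Ico l (l + G.card + 1) → w' n = 0) ∧ w' ≠ 0 ∧
        (∀ g ∈ G, coord (B w') g = 0) := by
      set Mstep := l + G.card + 1 with hMstep
      let sngl : ℕ → (Ep p) := fun k => lp.single (ENNReal.ofReal p) k (1:ℝ)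
      let emb : ({k // k ∈ Finset.Ico l Mstep} → ℝ) →ₗ[ℝ] (Ep p) :=
        { toFun := fun cv => ∑ k, cv k • sngl (k:ℕ)
          map_add' := by
            intro a b
            show (∑ k : {k // k ∈ Finset.Ico l Mstep}, (a + b) k • sngl (k:ℕ))
              = (∑ k : {k // k ∈ Finset.Ico l Mstep}, a k • sngl (k:ℕ))
                + ∑ k : {k // k ∈ Finset.Ico l Mstep}, b k • sngl (k:ℕ)
            rw [← Finset.sum_add_distrib]
            exact Finset.sum_congr rfl fun k _ => by rw [Pi.add_apply, add_smul]
          map_smul' := by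
            intro r a
            show (∑ k : {k // k ∈ Finset.Ico l Mstep}, (r • a) k • sngl (k:ℕ))
              = (RingHom.id ℝ r) • ∑ k : {k // k ∈ Finset.Ico l Mstep}, a k • sngl (k:ℕ)
            rw [RingHom.id_apply, Finset.smul_sum]
            exact Finset.sum_congr rfl fun k _ => by rw [Pi.smul_apply, smul_smul, smul_eq_mul] }
      let coordL : Y →ₗ[ℝ] (ℕ → ℝ) :=
        { toFun := coord
          map_add' := fun a b => by
            show coord (a + b) = coord a + coord b
            rw [coord_add a b]; rfl
          map_smul' := fun r a => by
            show coord (r • a) = (RingHom.id ℝ r) • coord a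
            rw [coord_smul r a]; rfl }
      let T : ({k // k ∈ Finset.Ico l Mstep} → ℝ) →ₗ[ℝ] ({g // g ∈ G} → ℝ) :=
        (LinearMap.funLeft ℝ ℝ (fun g : {g // g ∈ G} => (g:ℕ))).comp
          ((coordL.comp (B.toLinearMap.comp emb)))
      have hcardι : Fintype.card {k // k ∈ Finset.Ico l Mstep} = G.card + 1 := by
        rw [Fintype.card_coe, Nat.card_Ico]
        omega
      have hninj : ¬ Function.Injective T := by
        intro hinj
        have h1 := LinearMap.finrank_le_finrank_of_injective hinj
        rw [Module.finrank_pi, Module.finrank_pi, hcardι, Fintype.card_coe] at h1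
        omega
      have hker : LinearMap.ker T ≠ ⊥ := fun h => hninj (LinearMap.ker_eq_bot.mp h)
      obtain ⟨cv, hcvmem, hcv0⟩ := (Submodule.ne_bot_iff _).mp hker
      have hcvker : ∀ g : {g // g ∈ G}, coord (B (emb cv)) (g:ℕ) = 0 := by
        intro g
        have h1 : T cv = 0 := LinearMap.mem_ker.mp hcvmem
        exact congrFun h1 g
      have hw'coe : ∀ n, (emb cv : ℕ → ℝ) n
          = ∑ k : {k // k ∈ Finset.Ico l Mstep}, cv k * ((sngl (k:ℕ) : Ep p) : ℕ → ℝ) n := by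
        intro n
        have h1 : (emb cv : Ep p) = ∑ k, cv k • sngl (k:ℕ) := rfl
        rw [h1, lp.coeFn_sum, Finset.sum_apply]
        exact Finset.sum_congr rfl fun k _ => by rw [lp.coeFn_smul, Pi.smul_apply, smul_eq_mul]
      refine ⟨emb cv, ?_, ?_, ?_⟩
      · intro n hn
        rw [hw'coe]
        refine Finset.sum_eq_zero fun k _ => ?_
        rw [lp.single_apply_ne _ _ _ (fun h => hn (by rw [h]; exact k.2)), mul_zero]
      · obtain ⟨k₀, hk₀⟩ : ∃ k₀ : {k // k ∈ Finset.Ico l Mstep}, cv k₀ ≠ 0 :=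
          Function.ne_iff.mp hcv0
        have hw'k₀ : (emb cv : ℕ → ℝ) (k₀ : ℕ) = cv k₀ := by
          rw [hw'coe, Finset.sum_eq_single k₀]
          · rw [lp.single_apply_self, mul_one]
          · intro k _ hk
            rw [lp.single_apply_ne _ _ _ (fun h => hk (Subtype.coe_injective h).symm), mul_zero]
          · intro h
            exact absurd (Finset.mem_univ k₀) h
        intro h
        apply hk₀
        rw [← hw'k₀, h]
        rfl
      · intro g hg
        exact hcvker ⟨g, hg⟩
    have hw'pos : 0 < ‖w'‖ := norm_pos_iff.mpr hw'ne
    set w : Ep p := ‖w'‖⁻¹ • w' with hwdef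
    have hwnorm : ‖w‖ = 1 := by
      rw [hwdef, norm_smul, norm_inv, norm_norm, inv_mul_cancel₀ hw'pos.ne']
    have hwsupp : ∀ n, n ∉ Finset.Ico l (l + G.card + 1) → (w : ℕ → ℝ) n = 0 := by
      intro n hn
      rw [hwdef, lp.coeFn_smul, Pi.smul_apply, hw'supp n hn, smul_zero]
    have hcoordw : ∀ g ∈ G, coord (B w) g = 0 := by
      intro g hg
      rw [hwdef, map_smul, coord_smul]
      simp [hw'ker g hg]
    have hx := hcoord1 (B w)
    have h2 := (Metric.tendsto_nhds.mp hx) δ hδ0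
    obtain ⟨F₀, hF₀⟩ := Filter.eventually_atTop.mp h2
    refine ⟨w, F₀ \ G, Finset.disjoint_sdiff, hwsupp, hwnorm, hcoordw, ?_⟩
    have h3 := hF₀ (F₀ ∪ G) Finset.subset_union_left
    have h4 : ∑ n ∈ F₀ ∪ G, coord (B w) n • y n
        = ∑ g ∈ F₀ \ G, coord (B w) g • y g := by
      rw [← Finset.sdiff_union_self_eq_union, Finset.sum_union Finset.sdiff_disjoint]
      have h5 : ∑ g ∈ G, coord (B w) g • y g = 0 :=
        Finset.sum_eq_zero (fun g hg => by rw [hcoordw g hg, zero_smul])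
      rw [h5, add_zero]
    rw [dist_eq_norm, h4] at h3
    rw [norm_sub_rev]
    exact h3.le
  -- recursion
  choose W GG hdisjG hsuppW hnormW hcoordW hcloseW using step
  set st : ℕ → ℕ × Finset ℕ := fun i =>
    Nat.rec (N, ∅) (fun _ s => (s.1 + s.2.card + 1, s.2 ∪ GG s.1 s.2)) i with hst
  have hstsucc : ∀ i, st (i + 1)
      = ((st i).1 + (st i).2.card + 1, (st i).2 ∪ GG (st i).1 (st i).2) := fun i => rfl
  set w : ℕ → Ep p := fun i => W (st i).1 (st i).2 with hwdef
  set G' : ℕ → Finset ℕ := fun i => GG (st i).1 (st i).2 with hG'def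
  set Dset : ℕ → Finset ℕ := fun i => Finset.Ico (st i).1 ((st (i + 1)).1) with hDset
  have hmono : StrictMono (fun i => (st i).1) := by
    apply strictMono_nat_of_lt_succ
    intro i
    rw [hstsucc]
    omega
  have hsupp2 : ∀ i n, n ∉ Dset i → (w i : ℕ → ℝ) n = 0 := by
    intro i n hn
    refine hsuppW (st i).1 (st i).2 n ?_
    simp only [hDset, hstsucc] at hn
    exact hn
  have hDdisj : ∀ i j, i ≠ j → Disjoint (Dset i) (Dset j) := by
    have key : ∀ i j, i < j → Disjoint (Dset i) (Dset j) := by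
      intro i j h
      rw [Finset.disjoint_left]
      intro n hni hnj
      rw [hDset, Finset.mem_Ico] at hni hnj
      have h1 : (st (i + 1)).1 ≤ (st j).1 := hmono.monotone h
      omega
    intro i j hij
    rcases hij.lt_or_gt with h | h
    · exact key i j h
    · exact (key j i h).symm
  have hGpart : ∀ i j, i < j → G' i ⊆ (st j).2 := by
    intro i j h
    induction j with
    | zero => omega
    | succ j ih =>
      rw [hstsucc]
      rcases Nat.lt_succ_iff_lt_or_eq.mp h with h' | h'
      · exact (ih h').trans Finset.subset_union_left
      · subst h'
        exact Finset.subset_union_right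
  have hGdisj : ∀ i j, i ≠ j → Disjoint (G' i) (G' j) := by
    have key : ∀ i j, i < j → Disjoint (G' i) (G' j) := by
      intro i j h
      exact Finset.disjoint_of_subset_left (hGpart i j h) (hdisjG (st j).1 (st j).2)
    intro i j hij
    rcases hij.lt_or_gt with h | h
    · exact key i j h
    · exact (key j i h).symm
  -- the vectors d i
  set d : ℕ → Y := fun i => ∑ g ∈ G' i, coord (B (w i)) g • y g with hddef
  have hBw : ∀ i, ‖B (w i)‖ ≤ ‖B‖ := by
    intro i
    calc ‖B (w i)‖ ≤ ‖B‖ * ‖w i‖ := B.le_opNorm _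
      _ = ‖B‖ := by rw [hwdef, hnormW, mul_one]
  have hclose : ∀ i, ‖B (w i) - d i‖ ≤ δ := fun i => hcloseW (st i).1 (st i).2
  have hd : ∀ i, ‖d i‖ ≤ ‖B‖ + 1 := by
    intro i
    calc ‖d i‖ = ‖B (w i) - (B (w i) - d i)‖ := by rw [sub_sub_cancel]
      _ ≤ ‖B (w i)‖ + ‖B (w i) - d i‖ := norm_sub_le _ _
      _ ≤ ‖B‖ + 1 := add_le_add (hBw i) ((hclose i).trans hδ1)
  -- upper estimate application
  have hupper : ‖∑ i : Fin m, d (i : ℕ)‖ ≤ CY * ((m:ℝ) ^ (1/q) * (‖B‖ + 1)) := by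
    have h1 : ‖∑ i : Fin m, d (i : ℕ)‖
        ≤ CY * (∑ i : Fin m, ‖d (i : ℕ)‖ ^ q) ^ (1/q) := by
      apply hCY m _ (fun i : Fin m => G' (i : ℕ))
      · intro i j hij
        exact hGdisj _ _ (fun h => hij (Fin.val_injective h))
      · intro i
        refine Submodule.sum_mem _ fun g hg => Submodule.smul_mem _ _ ?_
        exact Submodule.subset_span ⟨g, by simpa using hg, rfl⟩
    have h2 : (∑ i : Fin m, ‖d (i : ℕ)‖ ^ q) ≤ (m:ℝ) * (‖B‖ + 1) ^ q := by
      calc (∑ i : Fin m, ‖d (i : ℕ)‖ ^ q) ≤ ∑ _i : Fin m, (‖B‖ + 1) ^ q :=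
            Finset.sum_le_sum fun i _ => Real.rpow_le_rpow (norm_nonneg _) (hd _) hq0.le
        _ = (m:ℝ) * (‖B‖ + 1) ^ q := by
            rw [Finset.sum_const, Finset.card_univ, Fintype.card_fin, nsmul_eq_mul]
    have h3 : ((∑ i : Fin m, ‖d (i : ℕ)‖ ^ q)) ^ (1/q) ≤ ((m:ℝ) * (‖B‖ + 1) ^ q) ^ (1/q) :=
      Real.rpow_le_rpow (Finset.sum_nonneg fun i _ => Real.rpow_nonneg (norm_nonneg _) q)
        h2 (by positivity)
    have h4 : ((m:ℝ) * (‖B‖ + 1) ^ q) ^ (1/q) = (m:ℝ) ^ (1/q) * (‖B‖ + 1) := by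
      rw [Real.mul_rpow hm0.le (Real.rpow_nonneg (by positivity) q)]
      rw [one_div, Real.rpow_rpow_inv (by positivity) hq0.ne']
    refine h1.trans ?_
    rw [← h4]
    exact mul_le_mul_of_nonneg_left h3 hCY0.le
  -- total vector
  set tot : Ep p := ∑ i : Fin m, w (i : ℕ) with htot
  have htotnormp : ‖tot‖ ^ p = (m:ℝ) := by
    rw [htot, aux_disj_norm hp0 Finset.univ _ (fun i : Fin m => Dset (i : ℕ))
      (fun i _ n hn => hsupp2 _ n hn)
      (fun i _ j _ hij => hDdisj _ _ (fun h => hij (Fin.val_injective h)))]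
    have : ∀ i : Fin m, ‖w (i : ℕ)‖ ^ p = 1 := by
      intro i
      rw [hwdef, hnormW, Real.one_rpow]
    rw [Finset.sum_congr rfl (fun i _ => this i), Finset.sum_const, Finset.card_univ,
      Fintype.card_fin, nsmul_eq_mul, mul_one]
  have htotnorm : ‖tot‖ = (m:ℝ) ^ (1/p) := by
    rw [← htotnormp, one_div, Real.rpow_rpow_inv (norm_nonneg _) hp0.ne']
  -- the normalized vector
  set v : Ep p := (((m:ℝ) ^ (1/p))⁻¹) • tot with hv
  have hvnorm : ‖v‖ = 1 := by
    rw [hv, norm_smul, norm_inv, Real.norm_eq_abs, abs_of_pos hmp_pos, htotnorm,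
      inv_mul_cancel₀ hmp_pos.ne']
  have hvsupp : ∀ n, n ∉ Finset.Ico N ((st m).1) → (v : ℕ → ℝ) n = 0 := by
    intro n hn
    rw [hv, lp.coeFn_smul, Pi.smul_apply]
    have h1 : (tot : ℕ → ℝ) n = 0 := by
      rw [htot, lp.coeFn_sum, Finset.sum_apply]
      refine Finset.sum_eq_zero fun i _ => ?_
      refine hsupp2 _ n fun hmem => hn ?_
      rw [hDset, Finset.mem_Ico] at hmem
      rw [Finset.mem_Ico]
      have h2 : N ≤ (st (i:ℕ)).1 := by
        have : (st 0).1 ≤ (st (i:ℕ)).1 := hmono.monotone (Nat.zero_le _)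
        exact this
      have h3 : (st ((i:ℕ) + 1)).1 ≤ (st m).1 := hmono.monotone i.2
      omega
    rw [h1, smul_zero]
  have happly := hcon ((st m).1) v hvsupp hvnorm
  have hBv : ‖B v‖ = (((m:ℝ) ^ (1/p))⁻¹) * ‖B tot‖ := by
    rw [hv, map_smul, norm_smul, norm_inv, Real.norm_eq_abs, abs_of_pos hmp_pos]
  have hBtot_lower : ε * (m:ℝ) ^ (1/p) ≤ ‖B tot‖ := by
    rw [hBv, inv_mul_eq_div, le_div_iff₀ hmp_pos] at happly
    linarith [happly]
  -- upper bound on ‖B tot‖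
  have hBtot_upper : ‖B tot‖ ≤ CY * ((m:ℝ) ^ (1/q) * (‖B‖ + 1)) + (m:ℝ) * δ := by
    have h1 : B tot = ∑ i : Fin m, B (w (i : ℕ)) := by rw [htot, map_sum]
    have h2 : ‖∑ i : Fin m, B (w (i : ℕ)) - ∑ i : Fin m, d (i : ℕ)‖ ≤ (m:ℝ) * δ := by
      rw [← Finset.sum_sub_distrib]
      calc ‖∑ i : Fin m, (B (w (i : ℕ)) - d (i : ℕ))‖
          ≤ ∑ i : Fin m, ‖B (w (i : ℕ)) - d (i : ℕ)‖ := norm_sum_le _ _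
        _ ≤ ∑ _i : Fin m, δ := Finset.sum_le_sum fun i _ => hclose _
        _ = (m:ℝ) * δ := by
            rw [Finset.sum_const, Finset.card_univ, Fintype.card_fin, nsmul_eq_mul]
    calc ‖B tot‖ = ‖(∑ i : Fin m, B (w (i : ℕ)) - ∑ i : Fin m, d (i : ℕ))
          + ∑ i : Fin m, d (i : ℕ)‖ := by rw [sub_add_cancel, h1]
      _ ≤ ‖∑ i : Fin m, B (w (i : ℕ)) - ∑ i : Fin m, d (i : ℕ)‖
          + ‖∑ i : Fin m, d (i : ℕ)‖ := norm_add_le _ _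
      _ ≤ (m:ℝ) * δ + CY * ((m:ℝ) ^ (1/q) * (‖B‖ + 1)) := add_le_add h2 hupper
      _ = CY * ((m:ℝ) ^ (1/q) * (‖B‖ + 1)) + (m:ℝ) * δ := by ring
  -- combine
  have hq1 : CY * ((m:ℝ) ^ (1/q) * (‖B‖ + 1)) ≤ ε/2 * (m:ℝ) ^ (1/p) := by
    have h8 : 2 * (CY * (‖B‖ + 1)) ≤ (m:ℝ) ^ (1/p - 1/q) * ε := by
      rw [div_le_iff₀ hε] at hm2
      exact hm2
    have h9 : (0:ℝ) ≤ (m:ℝ) ^ (1/q) := (Real.rpow_pos_of_pos hm0 _).le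
    have hexp : 1/p - 1/q + 1/q = 1/p := by ring
    calc CY * ((m:ℝ) ^ (1/q) * (‖B‖ + 1)) = (CY * (‖B‖ + 1)) * (m:ℝ) ^ (1/q) := by ring
      _ ≤ (ε/2 * (m:ℝ) ^ (1/p - 1/q)) * (m:ℝ) ^ (1/q) := by
          apply mul_le_mul_of_nonneg_right _ h9
          linarith
      _ = ε/2 * (m:ℝ) ^ (1/p) := by
          rw [mul_assoc, ← Real.rpow_add hm0, hexp]
  have hfinal : ε * (m:ℝ) ^ (1/p) ≤ (3/4 * ε) * (m:ℝ) ^ (1/p) := by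
    calc ε * (m:ℝ) ^ (1/p) ≤ ‖B tot‖ := hBtot_lower
      _ ≤ CY * ((m:ℝ) ^ (1/q) * (‖B‖ + 1)) + (m:ℝ) * δ := hBtot_upper
      _ ≤ ε/2 * (m:ℝ) ^ (1/p) + ε * (m:ℝ) ^ (1/p) / 4 := add_le_add hq1 hδ2
      _ = (3/4 * ε) * (m:ℝ) ^ (1/p) := by ring
  nlinarith [mul_pos hε hmp_pos]

variable {X : Type*} [NormedAddCommGroup X] [NormedSpace ℝ X]

set_option maxHeartbeats 1000000 in
lemma aux_hard (p q : ℝ) (hp : 1 ≤ p) (hpq : p < q)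
    (y : ℕ → Y) (hy : IsUncondBasis y) (hup : UpperEstimate y q)
    (h : ContainsLp (X × Y) p) : ContainsLp X p := by
  obtain ⟨J, C, c, hc, hJ⟩ := h
  haveI : Fact (1 ≤ ENNReal.ofReal p) := ⟨by simpa using ENNReal.ofReal_le_ofReal hp⟩
  have hp0 : (0:ℝ) < p := lt_of_lt_of_le one_pos hp
  have htp : (ENNReal.ofReal p).toReal = p := ENNReal.toReal_ofReal hp0.le
  have h0 : (0:ℝ) < (ENNReal.ofReal p).toReal := by rw [htp]; exact hp0
  set Jc : (Ep p) →L[ℝ] X × Y := J.mkContinuous C (fun f => (hJ f).1) with hJc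
  have hJcf : ∀ f, Jc f = J f := fun f => rfl
  set B : (Ep p) →L[ℝ] Y := (ContinuousLinearMap.snd ℝ X Y).comp Jc with hB
  -- blocks
  choose M F hsupp hnorm hBsmall using
    fun (N j : ℕ) => aux_claim p q hp hpq y hy hup B N (c / 2 ^ (j + 2))
      (by positivity)
  set lo : ℕ → ℕ := fun j => Nat.rec 0 (fun j l => max (M l j) (l + 1)) j with hlo
  have hlo_succ : ∀ j, lo (j + 1) = max (M (lo j) j) (lo j + 1) := fun j => rfl
  set u : ℕ → Ep p := fun j => F (lo j) j with hu
  set D : ℕ → Finset ℕ := fun j => Finset.Ico (lo j) (lo (j + 1)) with hD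
  have hlo_lt : ∀ j, lo j < lo (j + 1) := fun j => by
    rw [hlo_succ]; exact lt_of_lt_of_le (Nat.lt_succ_self _) (le_max_right _ _)
  have hlo_mono : StrictMono lo := strictMono_nat_of_lt_succ hlo_lt
  have hu_supp : ∀ j, ∀ n, n ∉ D j → u j n = 0 := by
    intro j n hn
    refine hsupp (lo j) j n (fun hmem => hn ?_)
    rw [Finset.mem_Ico] at hmem
    rw [hD, Finset.mem_Ico]
    exact ⟨hmem.1, lt_of_lt_of_le hmem.2 (by rw [hlo_succ]; exact le_max_left _ _)⟩
  have hD_disj : ∀ i j, i ≠ j → Disjoint (D i) (D j) := by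
    have key : ∀ i j, i < j → Disjoint (D i) (D j) := by
      intro i j h
      rw [Finset.disjoint_left]
      intro n hni hnj
      rw [hD] at hni hnj
      rw [Finset.mem_Ico] at hni hnj
      have h1 : lo (i + 1) ≤ lo j := hlo_mono.monotone h
      omega
    intro i j hij
    rcases hij.lt_or_gt with h | h
    · exact key i j h
    · exact (key j i h).symm
  have hBu : ∀ j, ‖B (u j)‖ < c / 2 ^ (j + 2) := fun j => hBsmall (lo j) j
  have hu_norm : ∀ j, ‖u j‖ = 1 := fun j => hnorm (lo j) j
  have hsmul_supp : ∀ (f : Ep p) (j n : ℕ), n ∉ D j → (f j • u j) n = 0 := by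
    intro f j n hn
    rw [lp.coeFn_smul, Pi.smul_apply, hu_supp j n hn, smul_zero]
  have hnorm_sum : ∀ (f : Ep p) (t : Finset ℕ),
      ‖∑ j ∈ t, f j • u j‖ ^ p = ∑ j ∈ t, ‖f j‖ ^ p := by
    intro f t
    rw [aux_disj_norm hp0 t _ D (fun j _ n hn => hsmul_supp f j n hn)
      (fun i _ j _ hij => hD_disj i j hij)]
    exact Finset.sum_congr rfl fun j _ => by rw [norm_smul, hu_norm, mul_one]
  have habs : ∀ f : Ep p, HasSum (fun n => ‖f n‖ ^ p) (‖f‖ ^ p) := by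
    intro f; have := lp.hasSum_norm h0 f; rwa [htp] at this
  have hsummand : ∀ f : Ep p, Summable fun j => f j • u j := by
    intro f
    rw [summable_iff_vanishing_norm]
    intro ε hε
    obtain ⟨s, hs⟩ := summable_iff_vanishing_norm.1 (habs f).summable (ε ^ p)
      (Real.rpow_pos_of_pos hε p)
    refine ⟨s, fun t ht => ?_⟩
    have h1 := hs t ht
    by_contra hcon
    push_neg at hcon
    have h2 : ε ^ p ≤ ‖∑ j ∈ t, f j • u j‖ ^ p := Real.rpow_le_rpow hε.le hcon hp0.le
    rw [hnorm_sum] at h2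
    have h3 : ∑ j ∈ t, ‖f j‖ ^ p ≤ ‖∑ j ∈ t, ‖f j‖ ^ p‖ := le_abs_self _
    linarith
  set Sfun : (Ep p) → (Ep p) := fun f => ∑' j, f j • u j with hSfun
  have hasS : ∀ f : Ep p, HasSum (fun j => f j • u j) (Sfun f) := fun f => (hsummand f).hasSum
  have hSnorm : ∀ f, ‖Sfun f‖ = ‖f‖ := by
    intro f
    have h1 : Tendsto (fun t : Finset ℕ => ‖∑ j ∈ t, f j • u j‖) atTop (nhds ‖Sfun f‖) :=
      (continuous_norm.continuousAt.tendsto.comp (hasS f))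
    have h3 : Tendsto (fun t : Finset ℕ => ∑ j ∈ t, ‖f j‖ ^ p) atTop (nhds (‖f‖ ^ p)) := habs f
    have h4 := ((Real.continuousAt_rpow_const _ (1/p) (Or.inr (by positivity))).tendsto.comp h3)
    have h5 : (‖f‖ ^ p) ^ (1/p) = ‖f‖ := by
      rw [one_div, Real.rpow_rpow_inv (norm_nonneg f) hp0.ne']
    rw [Function.comp_def, h5] at h4
    have h6 : Tendsto (fun t : Finset ℕ => ‖∑ j ∈ t, f j • u j‖) atTop (nhds ‖f‖) := by
      refine h4.congr fun t => ?_
      rw [← hnorm_sum f t, one_div, Real.rpow_rpow_inv (norm_nonneg _) hp0.ne']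
    exact tendsto_nhds_unique h1 h6
  have hBS : ∀ f, ‖B (Sfun f)‖ ≤ c / 2 * ‖f‖ := by
    intro f
    have h1 : HasSum (fun j => B (f j • u j)) (B (Sfun f)) := (hasS f).mapL B
    have hpne : (ENNReal.ofReal p) ≠ 0 := by
      simp [ENNReal.ofReal_eq_zero, not_le, hp0]
    have hbound : ∀ j, ‖B (f j • u j)‖ ≤ ‖f‖ * (c / 4) * (1/2 : ℝ)^j := by
      intro j
      rw [map_smul, norm_smul]
      calc ‖f j‖ * ‖B (u j)‖ ≤ ‖f‖ * (c / 2 ^ (j + 2)) := by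
            apply mul_le_mul (lp.norm_apply_le_norm hpne f j) (hBu j).le (norm_nonneg _)
              (norm_nonneg _)
        _ = ‖f‖ * (c / 4) * (1/2 : ℝ)^j := by
            have h2 : (2:ℝ)^(j+2) = 4 * 2^j := by rw [pow_add]; ring
            rw [h2, one_div, inv_pow]
            ring
    have hsumm2 : Summable fun j => ‖f‖ * (c/4) * (1/2 : ℝ)^j :=
      (summable_geometric_two).mul_left _
    have hsumm3 : Summable fun j => ‖B (f j • u j)‖ :=
      Summable.of_nonneg_of_le (fun j => norm_nonneg _) hbound hsumm2
    calc ‖B (Sfun f)‖ = ‖∑' j, B (f j • u j)‖ := by rw [h1.tsum_eq]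
      _ ≤ ∑' j, ‖B (f j • u j)‖ := norm_tsum_le_tsum_norm hsumm3
      _ ≤ ∑' j, ‖f‖ * (c/4) * (1/2 : ℝ)^j := Summable.tsum_le_tsum hbound hsumm3 hsumm2
      _ = ‖f‖ * (c/4) * 2 := by rw [tsum_mul_left, tsum_geometric_two]
      _ = c / 2 * ‖f‖ := by ring
  have hadd : ∀ f g : Ep p, Sfun (f + g) = Sfun f + Sfun g := by
    intro f g
    have h1 : HasSum (fun j => ((f + g : Ep p) : ℕ → ℝ) j • u j) (Sfun f + Sfun g) := by
      refine ((hasS f).add (hasS g)).congr_fun fun j => ?_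
      rw [lp.coeFn_add, Pi.add_apply, add_smul]
    exact h1.tsum_eq
  have hsmul : ∀ (r : ℝ) (f : Ep p), Sfun (r • f) = r • Sfun f := by
    intro r f
    have h1 : HasSum (fun j => ((r • f : Ep p) : ℕ → ℝ) j • u j) (r • Sfun f) := by
      refine ((hasS f).const_smul r).congr_fun fun j => ?_
      rw [lp.coeFn_smul, Pi.smul_apply, smul_smul, smul_eq_mul]
    exact h1.tsum_eq
  set S : (Ep p) →ₗ[ℝ] (Ep p) :=
    { toFun := Sfun, map_add' := hadd, map_smul' := hsmul } with hSdef
  refine ⟨(LinearMap.fst ℝ X Y).comp (J.comp S), C, c/2, by positivity, fun f => ?_⟩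
  have hgoal : ((LinearMap.fst ℝ X Y).comp (J.comp S)) f = (J (Sfun f)).1 := rfl
  rw [hgoal]
  constructor
  · refine le_trans (norm_fst_le _) ?_
    have := (hJ (Sfun f)).1
    rwa [hSnorm f] at this
  · have hlow : c * ‖f‖ ≤ ‖J (Sfun f)‖ := by
      have := (hJ (Sfun f)).2
      rwa [hSnorm f] at this
    have hmax : ‖J (Sfun f)‖ = max ‖(J (Sfun f)).1‖ ‖(J (Sfun f)).2‖ := Prod.norm_def _
    have hsnd : (J (Sfun f)).2 = B (Sfun f) := rfl
    rw [hmax] at hlow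
    rcases le_max_iff.mp hlow with h | h
    · refine le_trans (mul_le_mul_of_nonneg_right (by linarith) (norm_nonneg f)) h
    · rw [hsnd] at h
      have h2 := hBS f
      have h3 : c * ‖f‖ ≤ c/2 * ‖f‖ := le_trans h h2
      have hf0 : ‖f‖ = 0 := le_antisymm (by nlinarith [norm_nonneg f]) (norm_nonneg f)
      rw [hf0, mul_zero]
      exact norm_nonneg _

end AuxStatement11

theorem statement11 {X Y : Type*} [NormedAddCommGroup X] [NormedSpace ℝ X] [CompleteSpace X]
    [NormedAddCommGroup Y] [NormedSpace ℝ Y] [CompleteSpace Y]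
    (p q : ℝ) (hp : 1 ≤ p) (hpq : p < q)
    (e : ℕ → X) (he : IsUncondBasis e) (hlow : LowerEstimate e q)
    (y : ℕ → Y) (hy : IsUncondBasis y) (hup : UpperEstimate y q) :
    ContainsLp (X × Y) p ↔ ContainsLp X p := by
  constructor
  · exact fun h => aux_hard p q hp hpq y hy hup h
  · rintro ⟨J, C, c, hc, hJ⟩
    refine ⟨(LinearMap.inl ℝ X Y).comp J, C, c, hc, fun f => ?_⟩
    have hnorm : ∀ x : X, ‖((x, (0:Y)) : X × Y)‖ = ‖x‖ := by
      intro x; rw [Prod.norm_def]; simp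
    simp only [LinearMap.comp_apply, LinearMap.inl_apply, hnorm]
    exact hJ f
end
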